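/- Let H be a quasi-bialgebra, A a left H-module algebra, and (𝔅, λ, Φ_λ) a left H-comodule algebra. Let U ∈ H⊗𝔅 be an invertible element with (ε⊗id)(U) = 1_𝔅, and define λ'(b) = U·λ(b)·U⁻¹ for b ∈ 𝔅 and Φ_{λ'} = (1_H⊗U)·(id_H⊗λ)(U)·Φ_λ·(Δ⊗id_𝔅)(U⁻¹). Then 𝔅' := (𝔅, λ', Φ_{λ'}) is again a left H-comodule algebra, and the map f: A▸<𝔅 → A▸<𝔅' defined by f(a▸<b) = U¹·a ▸< U²b (where U = U¹⊗U²) is an algebra isomorphism satisfying f(1_A▸<b) = 1_A▸<b for all b ∈ 𝔅. -/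

import Mathlib

open scoped TensorProduct

set_option maxHeartbeats 2000000
set_option synthInstance.maxHeartbeats 1000000

noncomputable section

namespace QHA

section Instances
variable (k : Type*) [Field k]
variable (A B C D E F G : Type*)
  [Ring A] [Algebra k A] [Ring B] [Algebra k B] [Ring C] [Algebra k C]
  [Ring D] [Algebra k D] [Ring E] [Algebra k E] [Ring F] [Algebra k F]
  [Ring G] [Algebra k G]

noncomputable scoped instance ring5 : Ring (A ⊗[k] (B ⊗[k] (C ⊗[k] (D ⊗[k] E)))) :=
  letI i : Ring (B ⊗[k] (C ⊗[k] (D ⊗[k] E))) := inferInstance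
  letI a : Algebra k (B ⊗[k] (C ⊗[k] (D ⊗[k] E))) := inferInstance
  inferInstance

noncomputable scoped instance alg5 : Algebra k (A ⊗[k] (B ⊗[k] (C ⊗[k] (D ⊗[k] E)))) :=
  letI i : Ring (B ⊗[k] (C ⊗[k] (D ⊗[k] E))) := inferInstance
  letI a : Algebra k (B ⊗[k] (C ⊗[k] (D ⊗[k] E))) := inferInstance
  inferInstance

noncomputable scoped instance ring6 : Ring (A ⊗[k] (B ⊗[k] (C ⊗[k] (D ⊗[k] (E ⊗[k] F))))) :=
  letI i : Ring (B ⊗[k] (C ⊗[k] (D ⊗[k] (E ⊗[k] F)))) := ring5 k B C D E F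
  letI a : Algebra k (B ⊗[k] (C ⊗[k] (D ⊗[k] (E ⊗[k] F)))) := alg5 k B C D E F
  inferInstance

noncomputable scoped instance alg6 : Algebra k (A ⊗[k] (B ⊗[k] (C ⊗[k] (D ⊗[k] (E ⊗[k] F))))) :=
  letI i : Ring (B ⊗[k] (C ⊗[k] (D ⊗[k] (E ⊗[k] F)))) := ring5 k B C D E F
  letI a : Algebra k (B ⊗[k] (C ⊗[k] (D ⊗[k] (E ⊗[k] F)))) := alg5 k B C D E F
  inferInstance

noncomputable scoped instance ring7 : Ring (A ⊗[k] (B ⊗[k] (C ⊗[k] (D ⊗[k] (E ⊗[k] (F ⊗[k] G)))))) :=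
  letI i : Ring (B ⊗[k] (C ⊗[k] (D ⊗[k] (E ⊗[k] (F ⊗[k] G))))) := ring6 k B C D E F G
  letI a : Algebra k (B ⊗[k] (C ⊗[k] (D ⊗[k] (E ⊗[k] (F ⊗[k] G))))) := alg6 k B C D E F G
  inferInstance

noncomputable scoped instance alg7 : Algebra k (A ⊗[k] (B ⊗[k] (C ⊗[k] (D ⊗[k] (E ⊗[k] (F ⊗[k] G)))))) :=
  letI i : Ring (B ⊗[k] (C ⊗[k] (D ⊗[k] (E ⊗[k] (F ⊗[k] G))))) := ring6 k B C D E F G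
  letI a : Algebra k (B ⊗[k] (C ⊗[k] (D ⊗[k] (E ⊗[k] (F ⊗[k] G))))) := alg6 k B C D E F G
  inferInstance

end Instances

section Structures

variable (k H : Type*) [Field k] [Ring H] [Algebra k H]

/-- A quasi-bialgebra, with all axioms stated in terms of finite
representations of the relevant tensors as sums of pure tensors. -/
structure QuasiBialgebra where
  comul : H →ₐ[k] H ⊗[k] H
  counit : H →ₐ[k] k
  Phi : H ⊗[k] (H ⊗[k] H)
  PhiInv : H ⊗[k] (H ⊗[k] H)
  Phi_mul_inv : Phi * PhiInv = 1
  Phi_inv_mul : PhiInv * Phi = 1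
  quasi_coassoc :
    ∀ (h : H) (n : ℕ) (a b : Fin n → H),
      comul h = ∑ i, a i ⊗ₜ[k] b i →
      ∀ (m : ℕ) (c1 c2 : Fin n → Fin m → H),
        (∀ i, comul (a i) = ∑ j, c1 i j ⊗ₜ[k] c2 i j) →
        (∑ i, a i ⊗ₜ[k] comul (b i))
          = Phi * (∑ i, ∑ j, c1 i j ⊗ₜ[k] (c2 i j ⊗ₜ[k] b i)) * PhiInv
  counit_comul_left :
    ∀ (h : H) (n : ℕ) (a b : Fin n → H),
      comul h = ∑ i, a i ⊗ₜ[k] b i → (∑ i, counit (a i) • b i) = h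
  counit_comul_right :
    ∀ (h : H) (n : ℕ) (a b : Fin n → H),
      comul h = ∑ i, a i ⊗ₜ[k] b i → (∑ i, counit (b i) • a i) = h
  pentagon :
    ∀ (n : ℕ) (X1 X2 X3 : Fin n → H),
      Phi = ∑ i, X1 i ⊗ₜ[k] (X2 i ⊗ₜ[k] X3 i) →
      ∀ (m : ℕ) (c1 c2 : Fin n → Fin m → H),
        (∀ i, comul (X2 i) = ∑ j, c1 i j ⊗ₜ[k] c2 i j) →
      ∀ (p : ℕ) (d1 d2 : Fin n → Fin p → H),
        (∀ i, comul (X1 i) = ∑ j, d1 i j ⊗ₜ[k] d2 i j) →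
        ((1 : H) ⊗ₜ[k] Phi)
          * (∑ i, ∑ j, X1 i ⊗ₜ[k] (c1 i j ⊗ₜ[k] (c2 i j ⊗ₜ[k] X3 i)))
          * (∑ i, X1 i ⊗ₜ[k] (X2 i ⊗ₜ[k] (X3 i ⊗ₜ[k] (1 : H))))
        = (∑ i, X1 i ⊗ₜ[k] (X2 i ⊗ₜ[k] comul (X3 i)))
          * (∑ i, ∑ j, d1 i j ⊗ₜ[k] (d2 i j ⊗ₜ[k] (X2 i ⊗ₜ[k] X3 i)))
  Phi_normal :
    ∀ (n : ℕ) (X1 X2 X3 : Fin n → H),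
      Phi = ∑ i, X1 i ⊗ₜ[k] (X2 i ⊗ₜ[k] X3 i) →
      (∑ i, counit (X2 i) • (X1 i ⊗ₜ[k] X3 i)) = (1 : H ⊗[k] H)

/-- A quasi-Hopf algebra. -/
structure QuasiHopfAlgebra extends QuasiBialgebra k H where
  antipode : H →ₗ[k] H
  antipodeInv : H →ₗ[k] H
  antipodeInv_antipode : ∀ h : H, antipodeInv (antipode h) = h
  antipode_antipodeInv : ∀ h : H, antipode (antipodeInv h) = h
  antipode_mul : ∀ a b : H, antipode (a * b) = antipode b * antipode a
  antipode_one : antipode 1 = 1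
  elA : H
  elB : H
  antipode_ax1 : ∀ (h : H) (n : ℕ) (a b : Fin n → H),
      comul h = ∑ i, a i ⊗ₜ[k] b i →
      (∑ i, antipode (a i) * elA * b i) = counit h • elA
  antipode_ax2 : ∀ (h : H) (n : ℕ) (a b : Fin n → H),
      comul h = ∑ i, a i ⊗ₜ[k] b i →
      (∑ i, a i * elB * antipode (b i)) = counit h • elB
  antipode_ax3 : ∀ (n : ℕ) (X1 X2 X3 : Fin n → H),
      Phi = ∑ i, X1 i ⊗ₜ[k] (X2 i ⊗ₜ[k] X3 i) →
      (∑ i, X1 i * elB * antipode (X2 i) * elA * X3 i) = 1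
  antipode_ax4 : ∀ (n : ℕ) (x1 x2 x3 : Fin n → H),
      PhiInv = ∑ i, x1 i ⊗ₜ[k] (x2 i ⊗ₜ[k] x3 i) →
      (∑ i, antipode (x1 i) * elA * x2 i * elB * antipode (x3 i)) = 1

end Structures

section ModuleAlgebras

variable {k H : Type*} [Field k] [Ring H] [Algebra k H]

/-- A left module algebra over a quasi-bialgebra. -/
structure LeftModuleAlgebra (Q : QuasiBialgebra k H) (A : Type*)
    [AddCommGroup A] [Module k A] where
  act : H →ₗ[k] A →ₗ[k] A
  one : A
  mul : A →ₗ[k] A →ₗ[k] A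
  one_act : ∀ a : A, act 1 a = a
  mul_act : ∀ (g h : H) (a : A), act (g * h) a = act g (act h a)
  mulOne : ∀ a : A, mul a one = a
  oneMul : ∀ a : A, mul one a = a
  quasi_assoc : ∀ (a b c : A) (n : ℕ) (X1 X2 X3 : Fin n → H),
      Q.Phi = ∑ i, X1 i ⊗ₜ[k] (X2 i ⊗ₜ[k] X3 i) →
      mul (mul a b) c = ∑ i, mul (act (X1 i) a) (mul (act (X2 i) b) (act (X3 i) c))
  act_distrib : ∀ (h : H) (a b : A) (n : ℕ) (d1 d2 : Fin n → H),
      Q.comul h = ∑ i, d1 i ⊗ₜ[k] d2 i →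
      act h (mul a b) = ∑ i, mul (act (d1 i) a) (act (d2 i) b)
  act_unit : ∀ h : H, act h one = Q.counit h • one

/-- A right module algebra over a quasi-bialgebra. -/
structure RightModuleAlgebra (Q : QuasiBialgebra k H) (B : Type*)
    [AddCommGroup B] [Module k B] where
  act : B →ₗ[k] H →ₗ[k] B
  one : B
  mul : B →ₗ[k] B →ₗ[k] B
  act_one : ∀ b : B, act b 1 = b
  act_mul : ∀ (b : B) (g h : H), act b (g * h) = act (act b g) h
  mulOne : ∀ b : B, mul b one = b
  oneMul : ∀ b : B, mul one b = b
  quasi_assoc : ∀ (a b c : B) (n : ℕ) (x1 x2 x3 : Fin n → H),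
      Q.PhiInv = ∑ i, x1 i ⊗ₜ[k] (x2 i ⊗ₜ[k] x3 i) →
      mul (mul a b) c = ∑ i, mul (act a (x1 i)) (mul (act b (x2 i)) (act c (x3 i)))
  act_distrib : ∀ (h : H) (a b : B) (n : ℕ) (d1 d2 : Fin n → H),
      Q.comul h = ∑ i, d1 i ⊗ₜ[k] d2 i →
      act (mul a b) h = ∑ i, mul (act a (d1 i)) (act b (d2 i))
  act_unit : ∀ h : H, act one h = Q.counit h • one

/-- An `H`-bimodule algebra over a quasi-bialgebra. -/
structure BimoduleAlgebra (Q : QuasiBialgebra k H) (M : Type*)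
    [AddCommGroup M] [Module k M] where
  actL : H →ₗ[k] M →ₗ[k] M
  actR : M →ₗ[k] H →ₗ[k] M
  one : M
  mul : M →ₗ[k] M →ₗ[k] M
  one_actL : ∀ m : M, actL 1 m = m
  mul_actL : ∀ (g h : H) (m : M), actL (g * h) m = actL g (actL h m)
  actR_one : ∀ m : M, actR m 1 = m
  actR_mul : ∀ (m : M) (g h : H), actR m (g * h) = actR (actR m g) h
  act_comm : ∀ (g : H) (m : M) (h : H), actR (actL g m) h = actL g (actR m h)
  mulOne : ∀ m : M, mul m one = m
  oneMul : ∀ m : M, mul one m = m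
  quasi_assoc : ∀ (a b c : M) (n : ℕ) (X1 X2 X3 : Fin n → H),
      Q.Phi = ∑ i, X1 i ⊗ₜ[k] (X2 i ⊗ₜ[k] X3 i) →
      ∀ (m : ℕ) (x1 x2 x3 : Fin m → H),
      Q.PhiInv = ∑ j, x1 j ⊗ₜ[k] (x2 j ⊗ₜ[k] x3 j) →
      mul (mul a b) c = ∑ i, ∑ j, mul (actR (actL (X1 i) a) (x1 j))
        (mul (actR (actL (X2 i) b) (x2 j)) (actR (actL (X3 i) c) (x3 j)))
  actL_distrib : ∀ (h : H) (a b : M) (n : ℕ) (d1 d2 : Fin n → H),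
      Q.comul h = ∑ i, d1 i ⊗ₜ[k] d2 i →
      actL h (mul a b) = ∑ i, mul (actL (d1 i) a) (actL (d2 i) b)
  actR_distrib : ∀ (h : H) (a b : M) (n : ℕ) (d1 d2 : Fin n → H),
      Q.comul h = ∑ i, d1 i ⊗ₜ[k] d2 i →
      actR (mul a b) h = ∑ i, mul (actR a (d1 i)) (actR b (d2 i))
  actL_unit : ∀ h : H, actL h one = Q.counit h • one
  actR_unit : ∀ h : H, actR one h = Q.counit h • one

end ModuleAlgebras

section ComoduleAlgebras

variable {k H : Type*} [Field k] [Ring H] [Algebra k H]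

/-- A right comodule algebra over a quasi-bialgebra. -/
structure RightComoduleAlgebra (Q : QuasiBialgebra k H) (A : Type*)
    [Ring A] [Algebra k A] where
  coact : A →ₐ[k] A ⊗[k] H
  Phir : A ⊗[k] (H ⊗[k] H)
  PhirInv : A ⊗[k] (H ⊗[k] H)
  Phir_mul_inv : Phir * PhirInv = 1
  Phir_inv_mul : PhirInv * Phir = 1
  coassoc : ∀ (a : A) (n : ℕ) (a0 : Fin n → A) (a1 : Fin n → H),
      coact a = ∑ i, a0 i ⊗ₜ[k] a1 i →
      ∀ (m : ℕ) (a00 : Fin n → Fin m → A) (a01 : Fin n → Fin m → H),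
        (∀ i, coact (a0 i) = ∑ j, a00 i j ⊗ₜ[k] a01 i j) →
        Phir * (∑ i, ∑ j, a00 i j ⊗ₜ[k] (a01 i j ⊗ₜ[k] a1 i))
          = (∑ i, a0 i ⊗ₜ[k] Q.comul (a1 i)) * Phir
  pentagon : ∀ (n : ℕ) (R1 : Fin n → A) (R2 R3 : Fin n → H),
      Phir = ∑ i, R1 i ⊗ₜ[k] (R2 i ⊗ₜ[k] R3 i) →
      ∀ (m : ℕ) (c1 c2 : Fin n → Fin m → H),
        (∀ i, Q.comul (R2 i) = ∑ j, c1 i j ⊗ₜ[k] c2 i j) →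
      ∀ (p : ℕ) (w0 : Fin n → Fin p → A) (w1 : Fin n → Fin p → H),
        (∀ i, coact (R1 i) = ∑ j, w0 i j ⊗ₜ[k] w1 i j) →
        ((1 : A) ⊗ₜ[k] Q.Phi)
          * (∑ i, ∑ j, R1 i ⊗ₜ[k] (c1 i j ⊗ₜ[k] (c2 i j ⊗ₜ[k] R3 i)))
          * (∑ i, R1 i ⊗ₜ[k] (R2 i ⊗ₜ[k] (R3 i ⊗ₜ[k] (1 : H))))
        = (∑ i, R1 i ⊗ₜ[k] (R2 i ⊗ₜ[k] Q.comul (R3 i)))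
          * (∑ i, ∑ j, w0 i j ⊗ₜ[k] (w1 i j ⊗ₜ[k] (R2 i ⊗ₜ[k] R3 i)))
  counital : ∀ (a : A) (n : ℕ) (a0 : Fin n → A) (a1 : Fin n → H),
      coact a = ∑ i, a0 i ⊗ₜ[k] a1 i → (∑ i, Q.counit (a1 i) • a0 i) = a
  Phir_normal_mid : ∀ (n : ℕ) (R1 : Fin n → A) (R2 R3 : Fin n → H),
      Phir = ∑ i, R1 i ⊗ₜ[k] (R2 i ⊗ₜ[k] R3 i) →
      (∑ i, Q.counit (R2 i) • (R1 i ⊗ₜ[k] R3 i)) = (1 : A ⊗[k] H)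
  Phir_normal_right : ∀ (n : ℕ) (R1 : Fin n → A) (R2 R3 : Fin n → H),
      Phir = ∑ i, R1 i ⊗ₜ[k] (R2 i ⊗ₜ[k] R3 i) →
      (∑ i, Q.counit (R3 i) • (R1 i ⊗ₜ[k] R2 i)) = (1 : A ⊗[k] H)

/-- A left comodule algebra over a quasi-bialgebra. -/
structure LeftComoduleAlgebra (Q : QuasiBialgebra k H) (B : Type*)
    [Ring B] [Algebra k B] where
  coact : B →ₐ[k] H ⊗[k] B
  Phil : H ⊗[k] (H ⊗[k] B)
  PhilInv : H ⊗[k] (H ⊗[k] B)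
  Phil_mul_inv : Phil * PhilInv = 1
  Phil_inv_mul : PhilInv * Phil = 1
  coassoc : ∀ (b : B) (n : ℕ) (bm : Fin n → H) (b0 : Fin n → B),
      coact b = ∑ i, bm i ⊗ₜ[k] b0 i →
      ∀ (m : ℕ) (d1 d2 : Fin n → Fin m → H),
        (∀ i, Q.comul (bm i) = ∑ j, d1 i j ⊗ₜ[k] d2 i j) →
        (∑ i, bm i ⊗ₜ[k] coact (b0 i)) * Phil
          = Phil * (∑ i, ∑ j, d1 i j ⊗ₜ[k] (d2 i j ⊗ₜ[k] b0 i))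
  pentagon : ∀ (n : ℕ) (L1 L2 : Fin n → H) (L3 : Fin n → B),
      Phil = ∑ i, L1 i ⊗ₜ[k] (L2 i ⊗ₜ[k] L3 i) →
      ∀ (m : ℕ) (c1 c2 : Fin n → Fin m → H),
        (∀ i, Q.comul (L2 i) = ∑ j, c1 i j ⊗ₜ[k] c2 i j) →
      ∀ (p : ℕ) (d1 d2 : Fin n → Fin p → H),
        (∀ i, Q.comul (L1 i) = ∑ j, d1 i j ⊗ₜ[k] d2 i j) →
      ∀ (q : ℕ) (X1 X2 X3 : Fin q → H),
        Q.Phi = ∑ i, X1 i ⊗ₜ[k] (X2 i ⊗ₜ[k] X3 i) →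
        ((1 : H) ⊗ₜ[k] Phil)
          * (∑ i, ∑ j, L1 i ⊗ₜ[k] (c1 i j ⊗ₜ[k] (c2 i j ⊗ₜ[k] L3 i)))
          * (∑ a, X1 a ⊗ₜ[k] (X2 a ⊗ₜ[k] (X3 a ⊗ₜ[k] (1 : B))))
        = (∑ i, L1 i ⊗ₜ[k] (L2 i ⊗ₜ[k] coact (L3 i)))
          * (∑ i, ∑ j, d1 i j ⊗ₜ[k] (d2 i j ⊗ₜ[k] (L2 i ⊗ₜ[k] L3 i)))
  counital : ∀ (b : B) (n : ℕ) (bm : Fin n → H) (b0 : Fin n → B),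
      coact b = ∑ i, bm i ⊗ₜ[k] b0 i → (∑ i, Q.counit (bm i) • b0 i) = b
  Phil_normal_mid : ∀ (n : ℕ) (L1 L2 : Fin n → H) (L3 : Fin n → B),
      Phil = ∑ i, L1 i ⊗ₜ[k] (L2 i ⊗ₜ[k] L3 i) →
      (∑ i, Q.counit (L2 i) • (L1 i ⊗ₜ[k] L3 i)) = (1 : H ⊗[k] B)
  Phil_normal_left : ∀ (n : ℕ) (L1 L2 : Fin n → H) (L3 : Fin n → B),
      Phil = ∑ i, L1 i ⊗ₜ[k] (L2 i ⊗ₜ[k] L3 i) →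
      (∑ i, Q.counit (L1 i) • (L2 i ⊗ₜ[k] L3 i)) = (1 : H ⊗[k] B)

/-- An `H`-bicomodule algebra over a quasi-bialgebra. -/
structure BicomoduleAlgebra (Q : QuasiBialgebra k H) (A : Type*)
    [Ring A] [Algebra k A] where
  left : LeftComoduleAlgebra Q A
  right : RightComoduleAlgebra Q A
  Philr : H ⊗[k] (A ⊗[k] H)
  PhilrInv : H ⊗[k] (A ⊗[k] H)
  Philr_mul_inv : Philr * PhilrInv = 1
  Philr_inv_mul : PhilrInv * Philr = 1
  compat : ∀ (u : A) (n : ℕ) (u0 : Fin n → A) (u1 : Fin n → H),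
      right.coact u = ∑ i, u0 i ⊗ₜ[k] u1 i →
      ∀ (m : ℕ) (v1 : Fin n → Fin m → H) (v2 : Fin n → Fin m → A),
        (∀ i, left.coact (u0 i) = ∑ j, v1 i j ⊗ₜ[k] v2 i j) →
      ∀ (p : ℕ) (w1 : Fin p → H) (w0 : Fin p → A),
        left.coact u = ∑ j, w1 j ⊗ₜ[k] w0 j →
        Philr * (∑ i, ∑ j, v1 i j ⊗ₜ[k] (v2 i j ⊗ₜ[k] u1 i))
          = (∑ j, w1 j ⊗ₜ[k] right.coact (w0 j)) * Philr
  pentagonL : ∀ (n : ℕ) (T1 : Fin n → H) (T2 : Fin n → A) (T3 : Fin n → H),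
      Philr = ∑ i, T1 i ⊗ₜ[k] (T2 i ⊗ₜ[k] T3 i) →
      ∀ (m : ℕ) (M1 : Fin n → Fin m → H) (M2 : Fin n → Fin m → A),
        (∀ i, left.coact (T2 i) = ∑ j, M1 i j ⊗ₜ[k] M2 i j) →
      ∀ (p : ℕ) (d1 d2 : Fin n → Fin p → H),
        (∀ i, Q.comul (T1 i) = ∑ j, d1 i j ⊗ₜ[k] d2 i j) →
      ∀ (q : ℕ) (L1 L2 : Fin q → H) (L3 : Fin q → A),
        left.Phil = ∑ i, L1 i ⊗ₜ[k] (L2 i ⊗ₜ[k] L3 i) →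
        ((1 : H) ⊗ₜ[k] Philr)
          * (∑ i, ∑ j, T1 i ⊗ₜ[k] (M1 i j ⊗ₜ[k] (M2 i j ⊗ₜ[k] T3 i)))
          * (∑ a, L1 a ⊗ₜ[k] (L2 a ⊗ₜ[k] (L3 a ⊗ₜ[k] (1 : H))))
        = (∑ a, L1 a ⊗ₜ[k] (L2 a ⊗ₜ[k] right.coact (L3 a)))
          * (∑ i, ∑ j, d1 i j ⊗ₜ[k] (d2 i j ⊗ₜ[k] (T2 i ⊗ₜ[k] T3 i)))
  pentagonR : ∀ (n : ℕ) (T1 : Fin n → H) (T2 : Fin n → A) (T3 : Fin n → H),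
      Philr = ∑ i, T1 i ⊗ₜ[k] (T2 i ⊗ₜ[k] T3 i) →
      ∀ (m : ℕ) (P0 : Fin n → Fin m → A) (P1 : Fin n → Fin m → H),
        (∀ i, right.coact (T2 i) = ∑ j, P0 i j ⊗ₜ[k] P1 i j) →
      ∀ (q : ℕ) (R1 : Fin q → A) (R2 R3 : Fin q → H),
        right.Phir = ∑ i, R1 i ⊗ₜ[k] (R2 i ⊗ₜ[k] R3 i) →
      ∀ (r : ℕ) (v1 : Fin q → Fin r → H) (v2 : Fin q → Fin r → A),
        (∀ i, left.coact (R1 i) = ∑ j, v1 i j ⊗ₜ[k] v2 i j) →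
        ((1 : H) ⊗ₜ[k] right.Phir)
          * (∑ i, ∑ j, T1 i ⊗ₜ[k] (P0 i j ⊗ₜ[k] (P1 i j ⊗ₜ[k] T3 i)))
          * (∑ i, T1 i ⊗ₜ[k] (T2 i ⊗ₜ[k] (T3 i ⊗ₜ[k] (1 : H))))
        = (∑ i, T1 i ⊗ₜ[k] (T2 i ⊗ₜ[k] Q.comul (T3 i)))
          * (∑ a, ∑ j, v1 a j ⊗ₜ[k] (v2 a j ⊗ₜ[k] (R2 a ⊗ₜ[k] R3 a)))

end ComoduleAlgebras

section TwoSided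

variable {k H : Type*} [Field k] [Ring H] [Algebra k H]

/-- A two-sided coaction `(δ, Ψ)` of a quasi-bialgebra on a unital associative algebra. -/
structure TwoSidedCoaction (Q : QuasiBialgebra k H) (A : Type*)
    [Ring A] [Algebra k A] where
  coact : A →ₐ[k] H ⊗[k] (A ⊗[k] H)
  Psi : H ⊗[k] (H ⊗[k] (A ⊗[k] (H ⊗[k] H)))
  PsiInv : H ⊗[k] (H ⊗[k] (A ⊗[k] (H ⊗[k] H)))
  Psi_mul_inv : Psi * PsiInv = 1
  Psi_inv_mul : PsiInv * Psi = 1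
  tc1 : ∀ (u : A) (n : ℕ) (p : Fin n → H) (q : Fin n → A) (r : Fin n → H),
      coact u = ∑ i, p i ⊗ₜ[k] (q i ⊗ₜ[k] r i) →
      ∀ (m : ℕ) (p' : Fin n → Fin m → H) (q' : Fin n → Fin m → A) (r' : Fin n → Fin m → H),
        (∀ i, coact (q i) = ∑ j, p' i j ⊗ₜ[k] (q' i j ⊗ₜ[k] r' i j)) →
      ∀ (mc : ℕ) (c1 c2 : Fin n → Fin mc → H),
        (∀ i, Q.comul (p i) = ∑ j, c1 i j ⊗ₜ[k] c2 i j) →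
      ∀ (md : ℕ) (e1 e2 : Fin n → Fin md → H),
        (∀ i, Q.comul (r i) = ∑ j, e1 i j ⊗ₜ[k] e2 i j) →
      (∑ i, ∑ j, p i ⊗ₜ[k] (p' i j ⊗ₜ[k] (q' i j ⊗ₜ[k] (r' i j ⊗ₜ[k] r i)))) * Psi
        = Psi * (∑ i, ∑ j, ∑ l, c1 i j ⊗ₜ[k] (c2 i j ⊗ₜ[k] (q i ⊗ₜ[k] (e1 i l ⊗ₜ[k] e2 i l))))
  tc2 : ∀ (n : ℕ) (P1 P2 : Fin n → H) (P3 : Fin n → A) (P4 P5 : Fin n → H),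
      Psi = ∑ i, P1 i ⊗ₜ[k] (P2 i ⊗ₜ[k] (P3 i ⊗ₜ[k] (P4 i ⊗ₜ[k] P5 i))) →
      ∀ (mc : ℕ) (c1 c2 : Fin n → Fin mc → H),
        (∀ i, Q.comul (P2 i) = ∑ j, c1 i j ⊗ₜ[k] c2 i j) →
      ∀ (md : ℕ) (e1 e2 : Fin n → Fin md → H),
        (∀ i, Q.comul (P4 i) = ∑ j, e1 i j ⊗ₜ[k] e2 i j) →
      ∀ (mq : ℕ) (dp : Fin n → Fin mq → H) (dq : Fin n → Fin mq → A) (dr : Fin n → Fin mq → H),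
        (∀ i, coact (P3 i) = ∑ j, dp i j ⊗ₜ[k] (dq i j ⊗ₜ[k] dr i j)) →
      ∀ (mu : ℕ) (u1 u2 : Fin n → Fin mu → H),
        (∀ i, Q.comul (P1 i) = ∑ j, u1 i j ⊗ₜ[k] u2 i j) →
      ∀ (mv : ℕ) (v1 v2 : Fin n → Fin mv → H),
        (∀ i, Q.comul (P5 i) = ∑ j, v1 i j ⊗ₜ[k] v2 i j) →
      ∀ (nX : ℕ) (X1 X2 X3 : Fin nX → H),
        Q.Phi = ∑ i, X1 i ⊗ₜ[k] (X2 i ⊗ₜ[k] X3 i) →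
      ∀ (nx : ℕ) (x1 x2 x3 : Fin nx → H),
        Q.PhiInv = ∑ i, x1 i ⊗ₜ[k] (x2 i ⊗ₜ[k] x3 i) →
      (∑ i, (1 : H) ⊗ₜ[k] (P1 i ⊗ₜ[k] (P2 i ⊗ₜ[k] (P3 i ⊗ₜ[k] (P4 i ⊗ₜ[k] (P5 i ⊗ₜ[k] (1 : H)))))))
        * (∑ i, ∑ j, ∑ l, P1 i ⊗ₜ[k] (c1 i j ⊗ₜ[k] (c2 i j ⊗ₜ[k] (P3 i ⊗ₜ[k] (e1 i l ⊗ₜ[k] (e2 i l ⊗ₜ[k] P5 i))))))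
        * (∑ a, ∑ b, X1 a ⊗ₜ[k] (X2 a ⊗ₜ[k] (X3 a ⊗ₜ[k] ((1 : A) ⊗ₜ[k] (x1 b ⊗ₜ[k] (x2 b ⊗ₜ[k] x3 b))))))
      = (∑ i, ∑ j, P1 i ⊗ₜ[k] (P2 i ⊗ₜ[k] (dp i j ⊗ₜ[k] (dq i j ⊗ₜ[k] (dr i j ⊗ₜ[k] (P4 i ⊗ₜ[k] P5 i))))))
        * (∑ i, ∑ j, ∑ l, u1 i j ⊗ₜ[k] (u2 i j ⊗ₜ[k] (P2 i ⊗ₜ[k] (P3 i ⊗ₜ[k] (P4 i ⊗ₜ[k] (v1 i l ⊗ₜ[k] v2 i l))))))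
  tc3 : ∀ (u : A) (n : ℕ) (p : Fin n → H) (q : Fin n → A) (r : Fin n → H),
      coact u = ∑ i, p i ⊗ₜ[k] (q i ⊗ₜ[k] r i) →
      (∑ i, (Q.counit (p i) * Q.counit (r i)) • q i) = u
  tc4a : ∀ (n : ℕ) (P1 P2 : Fin n → H) (P3 : Fin n → A) (P4 P5 : Fin n → H),
      Psi = ∑ i, P1 i ⊗ₜ[k] (P2 i ⊗ₜ[k] (P3 i ⊗ₜ[k] (P4 i ⊗ₜ[k] P5 i))) →
      (∑ i, (Q.counit (P2 i) * Q.counit (P4 i)) • (P1 i ⊗ₜ[k] (P3 i ⊗ₜ[k] P5 i)))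
        = (1 : H) ⊗ₜ[k] ((1 : A) ⊗ₜ[k] (1 : H))
  tc4b : ∀ (n : ℕ) (P1 P2 : Fin n → H) (P3 : Fin n → A) (P4 P5 : Fin n → H),
      Psi = ∑ i, P1 i ⊗ₜ[k] (P2 i ⊗ₜ[k] (P3 i ⊗ₜ[k] (P4 i ⊗ₜ[k] P5 i))) →
      (∑ i, (Q.counit (P1 i) * Q.counit (P5 i)) • (P2 i ⊗ₜ[k] (P3 i ⊗ₜ[k] P4 i)))
        = (1 : H) ⊗ₜ[k] ((1 : A) ⊗ₜ[k] (1 : H))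

end TwoSided

section DrinfeldTwist

variable {k H : Type*} [Field k] [Ring H] [Algebra k H]

/-- `f` is the Drinfeld twist `f = (S⊗S)(Δᶜᵒᵖ(x¹))·γ·Δ(x²βS(x³))` of the
quasi-Hopf algebra `Q`, where `γ = S(A²)αA³ ⊗ S(A¹)αA⁴` and
`A¹⊗A²⊗A³⊗A⁴ = (Φ⊗1)(Δ⊗id⊗id)(Φ⁻¹)`. -/
def IsDrinfeldTwist (Q : QuasiHopfAlgebra k H) (f : H ⊗[k] H) : Prop :=
  ∀ (nX : ℕ) (X1 X2 X3 : Fin nX → H),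
    Q.Phi = ∑ i, X1 i ⊗ₜ[k] (X2 i ⊗ₜ[k] X3 i) →
  ∀ (n : ℕ) (x1 x2 x3 : Fin n → H),
    Q.PhiInv = ∑ i, x1 i ⊗ₜ[k] (x2 i ⊗ₜ[k] x3 i) →
  ∀ (nd : ℕ) (d1 d2 : Fin n → Fin nd → H),
    (∀ i, Q.comul (x1 i) = ∑ l, d1 i l ⊗ₜ[k] d2 i l) →
  ∀ (ne' : ℕ) (e1 e2 : Fin n → Fin ne' → H),
    (∀ i, Q.comul (x2 i * Q.elB * Q.antipode (x3 i)) = ∑ l, e1 i l ⊗ₜ[k] e2 i l) →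
  ∀ (nA : ℕ) (A1 A2 A3 A4 : Fin nA → H),
    (∑ j, A1 j ⊗ₜ[k] (A2 j ⊗ₜ[k] (A3 j ⊗ₜ[k] A4 j)))
      = (∑ i, X1 i ⊗ₜ[k] (X2 i ⊗ₜ[k] (X3 i ⊗ₜ[k] (1 : H))))
        * (∑ i, ∑ l, d1 i l ⊗ₜ[k] (d2 i l ⊗ₜ[k] (x2 i ⊗ₜ[k] x3 i))) →
  f = ∑ i, ∑ l, ∑ j, ∑ l',
      (Q.antipode (d2 i l) * (Q.antipode (A2 j) * Q.elA * A3 j) * e1 i l')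
        ⊗ₜ[k]
      (Q.antipode (d1 i l) * (Q.antipode (A1 j) * Q.elA * A4 j) * e2 i l')

/-- `g` is the inverse `g = Δ(S(x¹)αx²)·δ₀·(S⊗S)(Δᶜᵒᵖ(x³))` of the Drinfeld
twist of `Q`, where `δ₀ = B¹βS(B⁴) ⊗ B²βS(B³)` and
`B¹⊗B²⊗B³⊗B⁴ = (Δ⊗id⊗id)(Φ)(Φ⁻¹⊗1)`. -/
def IsDrinfeldTwistInv (Q : QuasiHopfAlgebra k H) (g : H ⊗[k] H) : Prop :=
  ∀ (nX : ℕ) (X1 X2 X3 : Fin nX → H),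
    Q.Phi = ∑ i, X1 i ⊗ₜ[k] (X2 i ⊗ₜ[k] X3 i) →
  ∀ (n : ℕ) (x1 x2 x3 : Fin n → H),
    Q.PhiInv = ∑ i, x1 i ⊗ₜ[k] (x2 i ⊗ₜ[k] x3 i) →
  ∀ (nD : ℕ) (D1 D2 : Fin nX → Fin nD → H),
    (∀ i, Q.comul (X1 i) = ∑ l, D1 i l ⊗ₜ[k] D2 i l) →
  ∀ (nu : ℕ) (u1 u2 : Fin n → Fin nu → H),
    (∀ i, Q.comul (Q.antipode (x1 i) * Q.elA * x2 i) = ∑ l, u1 i l ⊗ₜ[k] u2 i l) →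
  ∀ (nv : ℕ) (v1 v2 : Fin n → Fin nv → H),
    (∀ i, Q.comul (x3 i) = ∑ l, v1 i l ⊗ₜ[k] v2 i l) →
  ∀ (nB : ℕ) (B1 B2 B3 B4 : Fin nB → H),
    (∑ j, B1 j ⊗ₜ[k] (B2 j ⊗ₜ[k] (B3 j ⊗ₜ[k] B4 j)))
      = (∑ i, ∑ l, D1 i l ⊗ₜ[k] (D2 i l ⊗ₜ[k] (X2 i ⊗ₜ[k] X3 i)))
        * (∑ i, x1 i ⊗ₜ[k] (x2 i ⊗ₜ[k] (x3 i ⊗ₜ[k] (1 : H)))) →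
  g = ∑ i, ∑ l, ∑ j, ∑ l',
      (u1 i l * (B1 j * Q.elB * Q.antipode (B4 j)) * Q.antipode (v2 i l'))
        ⊗ₜ[k]
      (u2 i l * (B2 j * Q.elB * Q.antipode (B3 j)) * Q.antipode (v1 i l'))

end DrinfeldTwist

section OmegaElements

variable {k H : Type*} [Field k] [Ring H] [Algebra k H]
variable {A : Type*} [Ring A] [Algebra k A]

/-- `Ω` is the element `Ω_δ = Ψ̄¹⊗Ψ̄²⊗Ψ̄³⊗S⁻¹(f¹Ψ̄⁴)⊗S⁻¹(f²Ψ̄⁵)` attached to a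
two-sided coaction `(δ,Ψ)`, where `f` is the Drinfeld twist. -/
def IsOmegaTS (Q : QuasiHopfAlgebra k H) (D : TwoSidedCoaction Q.toQuasiBialgebra A)
    (f : H ⊗[k] H) (Om : H ⊗[k] (H ⊗[k] (A ⊗[k] (H ⊗[k] H)))) : Prop :=
  ∀ (n : ℕ) (B1 B2 : Fin n → H) (B3 : Fin n → A) (B4 B5 : Fin n → H),
    D.PsiInv = ∑ i, B1 i ⊗ₜ[k] (B2 i ⊗ₜ[k] (B3 i ⊗ₜ[k] (B4 i ⊗ₜ[k] B5 i))) →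
  ∀ (m : ℕ) (f1 f2 : Fin m → H), f = ∑ s, f1 s ⊗ₜ[k] f2 s →
  Om = ∑ i, ∑ s, B1 i ⊗ₜ[k] (B2 i ⊗ₜ[k] (B3 i ⊗ₜ[k]
        (Q.antipodeInv (f1 s * B4 i) ⊗ₜ[k] Q.antipodeInv (f2 s * B5 i))))

/-- `Ω'` is the element `Ω'_δ = S⁻¹(Ψ¹g¹)⊗S⁻¹(Ψ²g²)⊗Ψ³⊗Ψ⁴⊗Ψ⁵` attached to a
two-sided coaction `(δ,Ψ)`, where `g` is the inverse Drinfeld twist. -/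
def IsOmegaTS' (Q : QuasiHopfAlgebra k H) (D : TwoSidedCoaction Q.toQuasiBialgebra A)
    (g : H ⊗[k] H) (Om : H ⊗[k] (H ⊗[k] (A ⊗[k] (H ⊗[k] H)))) : Prop :=
  ∀ (n : ℕ) (P1 P2 : Fin n → H) (P3 : Fin n → A) (P4 P5 : Fin n → H),
    D.Psi = ∑ i, P1 i ⊗ₜ[k] (P2 i ⊗ₜ[k] (P3 i ⊗ₜ[k] (P4 i ⊗ₜ[k] P5 i))) →
  ∀ (m : ℕ) (g1 g2 : Fin m → H), g = ∑ s, g1 s ⊗ₜ[k] g2 s →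
  Om = ∑ i, ∑ s, Q.antipodeInv (P1 i * g1 s) ⊗ₜ[k] (Q.antipodeInv (P2 i * g2 s) ⊗ₜ[k]
        (P3 i ⊗ₜ[k] (P4 i ⊗ₜ[k] P5 i)))

/-- `Ω` is the canonical element
`Ω = (X̃¹ρ)[−1]₁x̃¹λθ¹ ⊗ (X̃¹ρ)[−1]₂x̃²λ(θ²)[−1] ⊗ (X̃¹ρ)[0]x̃³λ(θ²)[0]
      ⊗ S⁻¹(f¹X̃²ρθ³) ⊗ S⁻¹(f²X̃³ρ)`
attached to an `H`-bicomodule algebra. -/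
def IsOmegaL (Q : QuasiHopfAlgebra k H) (B : BicomoduleAlgebra Q.toQuasiBialgebra A)
    (f : H ⊗[k] H) (Om : H ⊗[k] (H ⊗[k] (A ⊗[k] (H ⊗[k] H)))) : Prop :=
  ∀ (n : ℕ) (R1 : Fin n → A) (R2 R3 : Fin n → H),
    B.right.Phir = ∑ i, R1 i ⊗ₜ[k] (R2 i ⊗ₜ[k] R3 i) →
  ∀ (nJ : ℕ) (L1 : Fin n → Fin nJ → H) (L2 : Fin n → Fin nJ → A),
    (∀ i, B.left.coact (R1 i) = ∑ j, L1 i j ⊗ₜ[k] L2 i j) →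
  ∀ (nL : ℕ) (D1 D2 : Fin n → Fin nJ → Fin nL → H),
    (∀ i j, Q.comul (L1 i j) = ∑ l, D1 i j l ⊗ₜ[k] D2 i j l) →
  ∀ (nM : ℕ) (y1 y2 : Fin nM → H) (y3 : Fin nM → A),
    B.left.PhilInv = ∑ i, y1 i ⊗ₜ[k] (y2 i ⊗ₜ[k] y3 i) →
  ∀ (nQ : ℕ) (t1 : Fin nQ → H) (t2 : Fin nQ → A) (t3 : Fin nQ → H),
    B.PhilrInv = ∑ i, t1 i ⊗ₜ[k] (t2 i ⊗ₜ[k] t3 i) →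
  ∀ (nR : ℕ) (M1 : Fin nQ → Fin nR → H) (M2 : Fin nQ → Fin nR → A),
    (∀ q, B.left.coact (t2 q) = ∑ r, M1 q r ⊗ₜ[k] M2 q r) →
  ∀ (nS : ℕ) (f1 f2 : Fin nS → H), f = ∑ s, f1 s ⊗ₜ[k] f2 s →
  Om = ∑ i, ∑ j, ∑ l, ∑ m, ∑ q, ∑ r, ∑ s,
      (D1 i j l * y1 m * t1 q) ⊗ₜ[k] ((D2 i j l * y2 m * M1 q r) ⊗ₜ[k]
        ((L2 i j * y3 m * M2 q r) ⊗ₜ[k]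
          (Q.antipodeInv (f1 s * R2 i * t3 q) ⊗ₜ[k] Q.antipodeInv (f2 s * R3 i))))

/-- `ω` is the canonical element
`ω = x̃¹λ ⊗ x̃²λΘ¹ ⊗ (x̃³λ)⟨0⟩X̃¹ρ(Θ²)⟨0⟩ ⊗ S⁻¹(f¹((x̃³λ)⟨1⟩)₁X̃²ρ(Θ²)⟨1⟩)
      ⊗ S⁻¹(f²((x̃³λ)⟨1⟩)₂X̃³ρΘ³)`
attached to an `H`-bicomodule algebra. -/
def IsOmegaR (Q : QuasiHopfAlgebra k H) (B : BicomoduleAlgebra Q.toQuasiBialgebra A)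
    (f : H ⊗[k] H) (Om : H ⊗[k] (H ⊗[k] (A ⊗[k] (H ⊗[k] H)))) : Prop :=
  ∀ (nM : ℕ) (y1 y2 : Fin nM → H) (y3 : Fin nM → A),
    B.left.PhilInv = ∑ i, y1 i ⊗ₜ[k] (y2 i ⊗ₜ[k] y3 i) →
  ∀ (nJ : ℕ) (a0 : Fin nM → Fin nJ → A) (b1 : Fin nM → Fin nJ → H),
    (∀ m, B.right.coact (y3 m) = ∑ j, a0 m j ⊗ₜ[k] b1 m j) →
  ∀ (nL : ℕ) (c1 d1 : Fin nM → Fin nJ → Fin nL → H),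
    (∀ m j, Q.comul (b1 m j) = ∑ l, c1 m j l ⊗ₜ[k] d1 m j l) →
  ∀ (n : ℕ) (R1 : Fin n → A) (R2 R3 : Fin n → H),
    B.right.Phir = ∑ i, R1 i ⊗ₜ[k] (R2 i ⊗ₜ[k] R3 i) →
  ∀ (nQ : ℕ) (T1 : Fin nQ → H) (T2 : Fin nQ → A) (T3 : Fin nQ → H),
    B.Philr = ∑ i, T1 i ⊗ₜ[k] (T2 i ⊗ₜ[k] T3 i) →
  ∀ (nR : ℕ) (P0 : Fin nQ → Fin nR → A) (P1 : Fin nQ → Fin nR → H),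
    (∀ q, B.right.coact (T2 q) = ∑ r, P0 q r ⊗ₜ[k] P1 q r) →
  ∀ (nS : ℕ) (f1 f2 : Fin nS → H), f = ∑ s, f1 s ⊗ₜ[k] f2 s →
  Om = ∑ m, ∑ j, ∑ l, ∑ i, ∑ q, ∑ r, ∑ s,
      (y1 m) ⊗ₜ[k] ((y2 m * T1 q) ⊗ₜ[k]
        ((a0 m j * R1 i * P0 q r) ⊗ₜ[k]
          (Q.antipodeInv (f1 s * c1 m j l * R2 i * P1 q r) ⊗ₜ[k]
           Q.antipodeInv (f2 s * d1 m j l * R3 i * T3 q))))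

end OmegaElements

section MultiplicationPredicates

variable {k H : Type*} [Field k] [Ring H] [Algebra k H]

/-- The multiplication of the left generalized diagonal crossed product
`𝒜 ⋈_δ 𝔸` for a two-sided coaction, with respect to the element `Ω`. -/
def IsGDCmulTS (Q : QuasiHopfAlgebra k H) {A M : Type*} [Ring A] [Algebra k A]
    [AddCommGroup M] [Module k M]
    (D : TwoSidedCoaction Q.toQuasiBialgebra A)
    (MA : BimoduleAlgebra Q.toQuasiBialgebra M)
    (Om : H ⊗[k] (H ⊗[k] (A ⊗[k] (H ⊗[k] H))))
    (mul : M ⊗[k] A →ₗ[k] M ⊗[k] A →ₗ[k] M ⊗[k] A) : Prop :=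
  ∀ (φ φ' : M) (u u' : A),
  ∀ (n : ℕ) (O1 O2 : Fin n → H) (O3 : Fin n → A) (O4 O5 : Fin n → H),
    Om = ∑ i, O1 i ⊗ₜ[k] (O2 i ⊗ₜ[k] (O3 i ⊗ₜ[k] (O4 i ⊗ₜ[k] O5 i))) →
  ∀ (m : ℕ) (p : Fin m → H) (q : Fin m → A) (r : Fin m → H),
    D.coact u = ∑ j, p j ⊗ₜ[k] (q j ⊗ₜ[k] r j) →
  mul (φ ⊗ₜ[k] u) (φ' ⊗ₜ[k] u')
    = ∑ i, ∑ j, (MA.mul (MA.actR (MA.actL (O1 i) φ) (O5 i))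
        (MA.actR (MA.actL (O2 i * p j) φ') (Q.antipodeInv (r j) * O4 i)))
      ⊗ₜ[k] (O3 i * q j * u')

/-- The multiplication of the right generalized diagonal crossed product
`𝔸 ⋈_δ 𝒜` for a two-sided coaction, with respect to the element `Ω'`. -/
def IsGDCmulTS' (Q : QuasiHopfAlgebra k H) {A M : Type*} [Ring A] [Algebra k A]
    [AddCommGroup M] [Module k M]
    (D : TwoSidedCoaction Q.toQuasiBialgebra A)
    (MA : BimoduleAlgebra Q.toQuasiBialgebra M)
    (Om : H ⊗[k] (H ⊗[k] (A ⊗[k] (H ⊗[k] H))))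
    (mul : A ⊗[k] M →ₗ[k] A ⊗[k] M →ₗ[k] A ⊗[k] M) : Prop :=
  ∀ (u u' : A) (φ φ' : M),
  ∀ (n : ℕ) (O1 O2 : Fin n → H) (O3 : Fin n → A) (O4 O5 : Fin n → H),
    Om = ∑ i, O1 i ⊗ₜ[k] (O2 i ⊗ₜ[k] (O3 i ⊗ₜ[k] (O4 i ⊗ₜ[k] O5 i))) →
  ∀ (m : ℕ) (p : Fin m → H) (q : Fin m → A) (r : Fin m → H),
    D.coact u' = ∑ j, p j ⊗ₜ[k] (q j ⊗ₜ[k] r j) →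
  mul (u ⊗ₜ[k] φ) (u' ⊗ₜ[k] φ')
    = ∑ i, ∑ j, (u * q j * O3 i) ⊗ₜ[k]
        (MA.mul (MA.actR (MA.actL (O2 i * Q.antipodeInv (p j)) φ) (r j * O4 i))
          (MA.actR (MA.actL (O1 i) φ') (O5 i)))

/-- The multiplication of the generalized diagonal crossed product `𝒜 ⋈ 𝔸`
(built from `δ_l`) over an `H`-bicomodule algebra `𝔸`. -/
def IsGDCmulL (Q : QuasiHopfAlgebra k H) {A M : Type*} [Ring A] [Algebra k A]
    [AddCommGroup M] [Module k M]
    (B : BicomoduleAlgebra Q.toQuasiBialgebra A)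
    (MA : BimoduleAlgebra Q.toQuasiBialgebra M)
    (Om : H ⊗[k] (H ⊗[k] (A ⊗[k] (H ⊗[k] H))))
    (mul : M ⊗[k] A →ₗ[k] M ⊗[k] A →ₗ[k] M ⊗[k] A) : Prop :=
  ∀ (φ φ' : M) (u u' : A),
  ∀ (n : ℕ) (O1 O2 : Fin n → H) (O3 : Fin n → A) (O4 O5 : Fin n → H),
    Om = ∑ i, O1 i ⊗ₜ[k] (O2 i ⊗ₜ[k] (O3 i ⊗ₜ[k] (O4 i ⊗ₜ[k] O5 i))) →
  ∀ (m : ℕ) (u0 : Fin m → A) (u1 : Fin m → H),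
    B.right.coact u = ∑ j, u0 j ⊗ₜ[k] u1 j →
  ∀ (p : ℕ) (v1 : Fin m → Fin p → H) (v2 : Fin m → Fin p → A),
    (∀ j, B.left.coact (u0 j) = ∑ l, v1 j l ⊗ₜ[k] v2 j l) →
  mul (φ ⊗ₜ[k] u) (φ' ⊗ₜ[k] u')
    = ∑ i, ∑ j, ∑ l, (MA.mul (MA.actR (MA.actL (O1 i) φ) (O5 i))
        (MA.actR (MA.actL (O2 i * v1 j l) φ') (Q.antipodeInv (u1 j) * O4 i)))
      ⊗ₜ[k] (O3 i * v2 j l * u')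

/-- The multiplication of the generalized diagonal crossed product `𝒜 ⧓ 𝔸`
(built from `δ_r`) over an `H`-bicomodule algebra `𝔸`. -/
def IsGDCmulR (Q : QuasiHopfAlgebra k H) {A M : Type*} [Ring A] [Algebra k A]
    [AddCommGroup M] [Module k M]
    (B : BicomoduleAlgebra Q.toQuasiBialgebra A)
    (MA : BimoduleAlgebra Q.toQuasiBialgebra M)
    (Om : H ⊗[k] (H ⊗[k] (A ⊗[k] (H ⊗[k] H))))
    (mul : M ⊗[k] A →ₗ[k] M ⊗[k] A →ₗ[k] M ⊗[k] A) : Prop :=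
  ∀ (φ φ' : M) (u u' : A),
  ∀ (n : ℕ) (O1 O2 : Fin n → H) (O3 : Fin n → A) (O4 O5 : Fin n → H),
    Om = ∑ i, O1 i ⊗ₜ[k] (O2 i ⊗ₜ[k] (O3 i ⊗ₜ[k] (O4 i ⊗ₜ[k] O5 i))) →
  ∀ (m : ℕ) (um : Fin m → H) (u0 : Fin m → A),
    B.left.coact u = ∑ j, um j ⊗ₜ[k] u0 j →
  ∀ (p : ℕ) (w0 : Fin m → Fin p → A) (w1 : Fin m → Fin p → H),
    (∀ j, B.right.coact (u0 j) = ∑ l, w0 j l ⊗ₜ[k] w1 j l) →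
  mul (φ ⊗ₜ[k] u) (φ' ⊗ₜ[k] u')
    = ∑ i, ∑ j, ∑ l, (MA.mul (MA.actR (MA.actL (O1 i) φ) (O5 i))
        (MA.actR (MA.actL (O2 i * um j) φ') (Q.antipodeInv (w1 j l) * O4 i)))
      ⊗ₜ[k] (O3 i * w0 j l * u')

/-- The multiplication of the generalized smash product `A ▸< 𝔅` of a left
module algebra and a left comodule algebra over a quasi-bialgebra. -/
def IsGSMmul (Q : QuasiBialgebra k H) {A B : Type*} [AddCommGroup A] [Module k A]
    [Ring B] [Algebra k B]
    (MA : LeftModuleAlgebra Q A) (CB : LeftComoduleAlgebra Q B)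
    (mul : A ⊗[k] B →ₗ[k] A ⊗[k] B →ₗ[k] A ⊗[k] B) : Prop :=
  ∀ (a a' : A) (b b' : B),
  ∀ (n : ℕ) (y1 y2 : Fin n → H) (y3 : Fin n → B),
    CB.PhilInv = ∑ i, y1 i ⊗ₜ[k] (y2 i ⊗ₜ[k] y3 i) →
  ∀ (m : ℕ) (bm : Fin m → H) (b0 : Fin m → B),
    CB.coact b = ∑ j, bm j ⊗ₜ[k] b0 j →
  mul (a ⊗ₜ[k] b) (a' ⊗ₜ[k] b')
    = ∑ i, ∑ j, (MA.mul (MA.act (y1 i) a) (MA.act (y2 i * bm j) a'))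
        ⊗ₜ[k] (y3 i * b0 j * b')

/-- The multiplication of the generalized smash product `𝔄 ▸◁ B` of a right
comodule algebra and a right module algebra over a quasi-bialgebra. -/
def IsRGSMmul (Q : QuasiBialgebra k H) {A B : Type*} [Ring A] [Algebra k A]
    [AddCommGroup B] [Module k B]
    (CA : RightComoduleAlgebra Q A) (MB : RightModuleAlgebra Q B)
    (mul : A ⊗[k] B →ₗ[k] A ⊗[k] B →ₗ[k] A ⊗[k] B) : Prop :=
  ∀ (a a' : A) (b b' : B),
  ∀ (n : ℕ) (x1 : Fin n → A) (x2 x3 : Fin n → H),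
    CA.PhirInv = ∑ i, x1 i ⊗ₜ[k] (x2 i ⊗ₜ[k] x3 i) →
  ∀ (m : ℕ) (a0 : Fin m → A) (a1 : Fin m → H),
    CA.coact a' = ∑ j, a0 j ⊗ₜ[k] a1 j →
  mul (a ⊗ₜ[k] b) (a' ⊗ₜ[k] b')
    = ∑ i, ∑ j, (a * a0 j * x1 i) ⊗ₜ[k]
        (MB.mul (MB.act b (a1 j * x2 i)) (MB.act b' (x3 i)))

/-- The multiplication of the two-sided generalized smash product
`A ▸< 𝔸 ▸◁ B`. -/
def IsTGSMmul (Q : QuasiBialgebra k H) {A AA B : Type*}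
    [AddCommGroup A] [Module k A] [Ring AA] [Algebra k AA]
    [AddCommGroup B] [Module k B]
    (MA : LeftModuleAlgebra Q A) (BC : BicomoduleAlgebra Q AA)
    (MB : RightModuleAlgebra Q B)
    (mul : A ⊗[k] (AA ⊗[k] B) →ₗ[k] A ⊗[k] (AA ⊗[k] B) →ₗ[k] A ⊗[k] (AA ⊗[k] B)) : Prop :=
  ∀ (a a' : A) (u u' : AA) (b b' : B),
  ∀ (n : ℕ) (y1 y2 : Fin n → H) (y3 : Fin n → AA),
    BC.left.PhilInv = ∑ i, y1 i ⊗ₜ[k] (y2 i ⊗ₜ[k] y3 i) →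
  ∀ (m : ℕ) (x1 : Fin m → AA) (x2 x3 : Fin m → H),
    BC.right.PhirInv = ∑ i, x1 i ⊗ₜ[k] (x2 i ⊗ₜ[k] x3 i) →
  ∀ (p : ℕ) (t1 : Fin p → H) (t2 : Fin p → AA) (t3 : Fin p → H),
    BC.PhilrInv = ∑ i, t1 i ⊗ₜ[k] (t2 i ⊗ₜ[k] t3 i) →
  ∀ (q : ℕ) (um : Fin q → H) (u0 : Fin q → AA),
    BC.left.coact u = ∑ j, um j ⊗ₜ[k] u0 j →
  ∀ (r : ℕ) (w0 : Fin r → AA) (w1 : Fin r → H),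
    BC.right.coact u' = ∑ j, w0 j ⊗ₜ[k] w1 j →
  mul (a ⊗ₜ[k] (u ⊗ₜ[k] b)) (a' ⊗ₜ[k] (u' ⊗ₜ[k] b'))
    = ∑ i, ∑ j, ∑ c, ∑ d, ∑ e,
      (MA.mul (MA.act (y1 i) a) (MA.act (y2 i * um j * t1 c) a'))
        ⊗ₜ[k] (((y3 i * u0 j * t2 c * w0 d * x1 e) : AA)
        ⊗ₜ[k] (MB.mul (MB.act b (t3 c * w1 d * x2 e)) (MB.act b' (x3 e))))

/-- The multiplication of the generalized two-sided crossed product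
`𝔄 >◁ 𝒜 ▷< 𝔅`. -/
def IsTSCPmul (Q : QuasiBialgebra k H) {AA M BB : Type*}
    [Ring AA] [Algebra k AA] [AddCommGroup M] [Module k M] [Ring BB] [Algebra k BB]
    (CA : RightComoduleAlgebra Q AA) (MA : BimoduleAlgebra Q M)
    (CB : LeftComoduleAlgebra Q BB)
    (mul : AA ⊗[k] (M ⊗[k] BB) →ₗ[k] AA ⊗[k] (M ⊗[k] BB) →ₗ[k] AA ⊗[k] (M ⊗[k] BB)) : Prop :=
  ∀ (a a' : AA) (φ φ' : M) (b b' : BB),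
  ∀ (n : ℕ) (x1 : Fin n → AA) (x2 x3 : Fin n → H),
    CA.PhirInv = ∑ i, x1 i ⊗ₜ[k] (x2 i ⊗ₜ[k] x3 i) →
  ∀ (m : ℕ) (y1 y2 : Fin m → H) (y3 : Fin m → BB),
    CB.PhilInv = ∑ i, y1 i ⊗ₜ[k] (y2 i ⊗ₜ[k] y3 i) →
  ∀ (p : ℕ) (a0 : Fin p → AA) (a1 : Fin p → H),
    CA.coact a' = ∑ j, a0 j ⊗ₜ[k] a1 j →
  ∀ (q : ℕ) (bm : Fin q → H) (b0 : Fin q → BB),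
    CB.coact b = ∑ j, bm j ⊗ₜ[k] b0 j →
  mul (a ⊗ₜ[k] (φ ⊗ₜ[k] b)) (a' ⊗ₜ[k] (φ' ⊗ₜ[k] b'))
    = ∑ i, ∑ c, ∑ j, ∑ d,
      (a * a0 j * x1 i) ⊗ₜ[k]
        ((MA.mul (MA.actR (MA.actL (y1 c) φ) (a1 j * x2 i))
          (MA.actR (MA.actL (y2 c * bm d) φ') (x3 i)))
        ⊗ₜ[k] (y3 c * b0 d * b'))

end MultiplicationPredicates

section HHop

variable {k H : Type*} [Field k] [Ring H] [Algebra k H]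

/-- `K` is the quasi-bialgebra `H ⊗ H^op`, with componentwise structure and
reassociator `(X¹⊗x¹)⊗(X²⊗x²)⊗(X³⊗x³)`. -/
def IsHHopQB (Q : QuasiBialgebra k H) (K : QuasiBialgebra k (H ⊗[k] Hᵐᵒᵖ)) : Prop :=
  (∀ (h h' : H) (n : ℕ) (a b : Fin n → H) (m : ℕ) (c d : Fin m → H),
    Q.comul h = ∑ i, a i ⊗ₜ[k] b i → Q.comul h' = ∑ j, c j ⊗ₜ[k] d j →
    K.comul (h ⊗ₜ[k] MulOpposite.op h')
      = ∑ i, ∑ j, (a i ⊗ₜ[k] MulOpposite.op (c j)) ⊗ₜ[k] (b i ⊗ₜ[k] MulOpposite.op (d j)))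
  ∧ (∀ h h' : H, K.counit (h ⊗ₜ[k] MulOpposite.op h') = Q.counit h * Q.counit h')
  ∧ (∀ (n : ℕ) (X1 X2 X3 : Fin n → H), Q.Phi = ∑ i, X1 i ⊗ₜ[k] (X2 i ⊗ₜ[k] X3 i) →
     ∀ (m : ℕ) (x1 x2 x3 : Fin m → H), Q.PhiInv = ∑ i, x1 i ⊗ₜ[k] (x2 i ⊗ₜ[k] x3 i) →
     K.Phi = ∑ i, ∑ j, (X1 i ⊗ₜ[k] MulOpposite.op (x1 j)) ⊗ₜ[k]
        ((X2 i ⊗ₜ[k] MulOpposite.op (x2 j)) ⊗ₜ[k] (X3 i ⊗ₜ[k] MulOpposite.op (x3 j))))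
  ∧ (∀ (n : ℕ) (X1 X2 X3 : Fin n → H), Q.Phi = ∑ i, X1 i ⊗ₜ[k] (X2 i ⊗ₜ[k] X3 i) →
     ∀ (m : ℕ) (x1 x2 x3 : Fin m → H), Q.PhiInv = ∑ i, x1 i ⊗ₜ[k] (x2 i ⊗ₜ[k] x3 i) →
     K.PhiInv = ∑ i, ∑ j, (x1 i ⊗ₜ[k] MulOpposite.op (X1 j)) ⊗ₜ[k]
        ((x2 i ⊗ₜ[k] MulOpposite.op (X2 j)) ⊗ₜ[k] (x3 i ⊗ₜ[k] MulOpposite.op (X3 j))))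

end HHop


section S7Aux
variable {k : Type*} [Field k]

lemma S7.sum_pad {M : Type*} [AddCommMonoid M] {m M' : ℕ} (h : m ≤ M') (f : Fin m → M) :
    (∑ j : Fin M', if hj : (j : ℕ) < m then f ⟨j, hj⟩ else 0) = ∑ j : Fin m, f j := by
  rw [Fin.sum_univ_eq_sum_range (fun j => if hj : j < m then f ⟨j, hj⟩ else 0) M']
  rw [show (∑ j ∈ Finset.range M', if hj : j < m then f ⟨j, hj⟩ else 0)
      = ∑ j ∈ Finset.range m, if hj : j < m then f ⟨j, hj⟩ else 0 from
    (Finset.sum_subset (Finset.range_subset_range.2 h)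
      (by intro x _ hx; rw [Finset.mem_range] at hx; simp [hx])).symm]
  rw [← Fin.sum_univ_eq_sum_range (fun j => if hj : j < m then f ⟨j, hj⟩ else 0) m]
  exact Finset.sum_congr rfl fun j _ => by simp [j.isLt]

lemma S7.exists_repr {M N : Type*} [AddCommMonoid M] [AddCommMonoid N] [Module k M] [Module k N]
    (x : M ⊗[k] N) : ∃ (n : ℕ) (a : Fin n → M) (b : Fin n → N), x = ∑ i, a i ⊗ₜ[k] b i := by
  induction x with
  | zero => exact ⟨0, fun i => 0, fun i => 0, by simp⟩
  | tmul m n => exact ⟨1, fun _ => m, fun _ => n, by simp⟩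
  | add x y hx hy =>
    obtain ⟨n, a, b, rfl⟩ := hx
    obtain ⟨n', a', b', rfl⟩ := hy
    refine ⟨n + n', Fin.addCases a a', Fin.addCases b b', ?_⟩
    rw [Fin.sum_univ_add]
    simp

lemma S7.exists_repr_fam {M N : Type*} [AddCommMonoid M] [AddCommMonoid N] [Module k M]
    [Module k N] (n : ℕ) (f : Fin n → M ⊗[k] N) :
    ∃ (m : ℕ) (a : Fin n → Fin m → M) (b : Fin n → Fin m → N),
      ∀ i, f i = ∑ j, a i j ⊗ₜ[k] b i j := by
  choose m a b h using fun i => S7.exists_repr (k := k) (f i)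
  refine ⟨Finset.univ.sup m,
    fun i j => if hj : (j : ℕ) < m i then a i ⟨j, hj⟩ else 0,
    fun i j => if hj : (j : ℕ) < m i then b i ⟨j, hj⟩ else 0, fun i => ?_⟩
  rw [h i, ← S7.sum_pad (Finset.le_sup (Finset.mem_univ i)) (fun j => a i j ⊗ₜ[k] b i j)]
  refine Finset.sum_congr rfl fun j _ => ?_
  by_cases hj : (j : ℕ) < m i
  · simp [hj]
  · simp [hj]

lemma S7.exists_repr3 {M N P : Type*} [AddCommMonoid M] [AddCommMonoid N] [AddCommMonoid P]
    [Module k M] [Module k N] [Module k P] (x : M ⊗[k] (N ⊗[k] P)) :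
    ∃ (n : ℕ) (a : Fin n → M) (b : Fin n → N) (c : Fin n → P),
      x = ∑ i, a i ⊗ₜ[k] (b i ⊗ₜ[k] c i) := by
  obtain ⟨n, a, y, rfl⟩ := S7.exists_repr (k := k) x
  obtain ⟨m, bb, cc, hb⟩ := S7.exists_repr_fam (k := k) n y
  refine ⟨n * m, fun q => a (finProdFinEquiv.symm q).1,
    fun q => bb (finProdFinEquiv.symm q).1 (finProdFinEquiv.symm q).2,
    fun q => cc (finProdFinEquiv.symm q).1 (finProdFinEquiv.symm q).2, ?_⟩
  rw [← Equiv.sum_comp (finProdFinEquiv (m := n) (n := m))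
    (fun q => a (finProdFinEquiv.symm q).1 ⊗ₜ[k]
      (bb (finProdFinEquiv.symm q).1 (finProdFinEquiv.symm q).2 ⊗ₜ[k]
       cc (finProdFinEquiv.symm q).1 (finProdFinEquiv.symm q).2))]
  simp only [Equiv.symm_apply_apply]
  rw [Fintype.sum_prod_type]
  refine Finset.sum_congr rfl fun i _ => ?_
  rw [hb i, TensorProduct.tmul_sum]

end S7Aux

section S7Maps
variable {k H : Type*} [Field k] [Ring H] [Algebra k H]
variable (Q : QuasiBialgebra k H)

/-- `(Δ ⊗ id)` reassociated. -/
noncomputable def S7.coDup (C : Type*) [Ring C] [Algebra k C] :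
    (H ⊗[k] C) →ₐ[k] H ⊗[k] (H ⊗[k] C) :=
  ((Algebra.TensorProduct.assoc k k k H H C).toAlgHom).comp
    (Algebra.TensorProduct.map Q.comul (AlgHom.id k C))

lemma S7.coDup_tmul {C : Type*} [Ring C] [Algebra k C] (h : H) (c : C) {n : ℕ}
    {d1 d2 : Fin n → H} (hd : Q.comul h = ∑ i, d1 i ⊗ₜ[k] d2 i) :
    S7.coDup Q C (h ⊗ₜ[k] c) = ∑ i, d1 i ⊗ₜ[k] (d2 i ⊗ₜ[k] c) := by
  simp [S7.coDup, hd, TensorProduct.sum_tmul]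

lemma S7.coDup_one_tmul {C : Type*} [Ring C] [Algebra k C] (c : C) :
    S7.coDup Q C ((1 : H) ⊗ₜ[k] c) = (1 : H) ⊗ₜ[k] ((1 : H) ⊗ₜ[k] c) := by
  have : S7.coDup Q C ((1 : H) ⊗ₜ[k] c)
      = ∑ _i : Fin 1, (1 : H) ⊗ₜ[k] ((1 : H) ⊗ₜ[k] c) :=
    S7.coDup_tmul Q 1 c (d1 := fun _ => 1) (d2 := fun _ => 1)
      (by simp [Algebra.TensorProduct.one_def])
  simpa using this

/-- `ε ⊗ id`. -/
noncomputable def S7.epsL (C : Type*) [Ring C] [Algebra k C] : (H ⊗[k] C) →ₐ[k] C :=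
  (Algebra.TensorProduct.lid k C).toAlgHom.comp
    (Algebra.TensorProduct.map Q.counit (AlgHom.id k C))

lemma S7.epsL_tmul {C : Type*} [Ring C] [Algebra k C] (h : H) (c : C) :
    S7.epsL Q C (h ⊗ₜ[k] c) = Q.counit h • c := by
  simp [S7.epsL]

/-- element form of quasi-coassociativity, multiplied by `Φ` on the right -/
lemma S7.quasi_coassocE (h : H) :
    Algebra.TensorProduct.map (AlgHom.id k H) Q.comul (Q.comul h) * Q.Phi
      = Q.Phi * S7.coDup Q H (Q.comul h) := by
  obtain ⟨n, a, b, hab⟩ := S7.exists_repr (k := k) (Q.comul h)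
  obtain ⟨m, c1, c2, hc⟩ := S7.exists_repr_fam (k := k) n (fun i => Q.comul (a i))
  have key := Q.quasi_coassoc h n a b hab m c1 c2 hc
  have h1 : Algebra.TensorProduct.map (AlgHom.id k H) Q.comul (Q.comul h)
      = ∑ i, a i ⊗ₜ[k] Q.comul (b i) := by
    rw [hab, map_sum]; simp
  have h2 : S7.coDup Q H (Q.comul h) = ∑ i, ∑ j, c1 i j ⊗ₜ[k] (c2 i j ⊗ₜ[k] b i) := by
    rw [hab, map_sum]
    exact Finset.sum_congr rfl fun i _ => S7.coDup_tmul Q (a i) (b i) (hc i)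
  rw [h1, h2, key, mul_assoc, mul_assoc, Q.Phi_inv_mul, mul_one]

lemma S7.counit_right (h : H) :
    (TensorProduct.rid k H) (TensorProduct.map LinearMap.id Q.counit.toLinearMap (Q.comul h))
      = h := by
  obtain ⟨n, a, b, hab⟩ := S7.exists_repr (k := k) (Q.comul h)
  have key := Q.counit_comul_right h n a b hab
  rw [hab, map_sum, map_sum]
  simpa using key

lemma S7.counit_left (h : H) :
    (TensorProduct.lid k H) (TensorProduct.map Q.counit.toLinearMap LinearMap.id (Q.comul h))
      = h := by
  obtain ⟨n, a, b, hab⟩ := S7.exists_repr (k := k) (Q.comul h)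
  have key := Q.counit_comul_left h n a b hab
  rw [hab, map_sum, map_sum]
  simpa using key

variable {C : Type*} [Ring C] [Algebra k C]

/-- `(id ⊗ ε ⊗ id)` kills `coDup`. -/
lemma S7.emid_coDup (x : H ⊗[k] C) :
    Algebra.TensorProduct.map (AlgHom.id k H) (S7.epsL Q C) (S7.coDup Q C x) = x := by
  induction x with
  | zero => simp
  | add x y hx hy => simp [map_add, hx, hy]
  | tmul h c =>
    obtain ⟨n, d1, d2, hd⟩ := S7.exists_repr (k := k) (Q.comul h)
    rw [S7.coDup_tmul Q h c hd, map_sum]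
    have key := Q.counit_comul_right h n d1 d2 hd
    calc ∑ i, Algebra.TensorProduct.map (AlgHom.id k H) (S7.epsL Q C)
          (d1 i ⊗ₜ[k] (d2 i ⊗ₜ[k] c))
        = ∑ i, Q.counit (d2 i) • (d1 i ⊗ₜ[k] c) := by
          simp [S7.epsL_tmul, TensorProduct.tmul_smul]
      _ = (∑ i, Q.counit (d2 i) • d1 i) ⊗ₜ[k] c := by
          rw [TensorProduct.sum_tmul]
          exact Finset.sum_congr rfl fun i _ => by
            rw [TensorProduct.smul_tmul']
      _ = h ⊗ₜ[k] c := by rw [key]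

/-- `(ε ⊗ id ⊗ id)` kills `coDup`. -/
lemma S7.eleft_coDup (x : H ⊗[k] C) :
    S7.epsL Q (H ⊗[k] C) (S7.coDup Q C x) = x := by
  induction x with
  | zero => simp
  | add x y hx hy => simp [map_add, hx, hy]
  | tmul h c =>
    obtain ⟨n, d1, d2, hd⟩ := S7.exists_repr (k := k) (Q.comul h)
    rw [S7.coDup_tmul Q h c hd, map_sum]
    have key := Q.counit_comul_left h n d1 d2 hd
    calc ∑ i, S7.epsL Q (H ⊗[k] C) (d1 i ⊗ₜ[k] (d2 i ⊗ₜ[k] c))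
        = ∑ i, (Q.counit (d1 i) • d2 i) ⊗ₜ[k] c := by
          simp [S7.epsL_tmul, TensorProduct.smul_tmul']
      _ = (∑ i, Q.counit (d1 i) • d2 i) ⊗ₜ[k] c := by rw [TensorProduct.sum_tmul]
      _ = h ⊗ₜ[k] c := by rw [key]

end S7Maps

section S7Inst
variable (k H B : Type*) [Field k] [Ring H] [Algebra k H] [Ring B] [Algebra k B]

noncomputable scoped instance S7.ring3 : Ring (H ⊗[k] (H ⊗[k] B)) := inferInstance
noncomputable scoped instance S7.alg3 : Algebra k (H ⊗[k] (H ⊗[k] B)) := inferInstance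
noncomputable scoped instance S7.ring4 : Ring (H ⊗[k] (H ⊗[k] (H ⊗[k] B))) :=
  letI i : Ring (H ⊗[k] (H ⊗[k] B)) := S7.ring3 k H B
  letI a : Algebra k (H ⊗[k] (H ⊗[k] B)) := S7.alg3 k H B
  inferInstance
noncomputable scoped instance S7.alg4 : Algebra k (H ⊗[k] (H ⊗[k] (H ⊗[k] B))) :=
  letI i : Ring (H ⊗[k] (H ⊗[k] B)) := S7.ring3 k H B
  letI a : Algebra k (H ⊗[k] (H ⊗[k] B)) := S7.alg3 k H B
  inferInstance
end S7Inst

section S7CB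
variable {k H B : Type*} [Field k] [Ring H] [Algebra k H] [Ring B] [Algebra k B]
variable (Q : QuasiBialgebra k H) (CB : LeftComoduleAlgebra Q B)

/-- `id ⊗ f` on `H ⊗ B`. -/
noncomputable def S7.lamMap (f : B →ₐ[k] H ⊗[k] B) :
    (H ⊗[k] B) →ₐ[k] H ⊗[k] (H ⊗[k] B) :=
  Algebra.TensorProduct.map (AlgHom.id k H) f

@[simp] lemma S7.lamMap_tmul (f : B →ₐ[k] H ⊗[k] B) (h : H) (c : B) :
    S7.lamMap f (h ⊗ₜ[k] c) = h ⊗ₜ[k] f c := by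
  simp [S7.lamMap]

/-- the embedding `Φ ↦ Φ ⊗ 1` of `H ⊗ H ⊗ H` into `H ⊗ H ⊗ H ⊗ B`. -/
noncomputable def S7.inclPhi : (H ⊗[k] (H ⊗[k] H)) →ₐ[k] H ⊗[k] (H ⊗[k] (H ⊗[k] B)) :=
  Algebra.TensorProduct.map (AlgHom.id k H)
    (Algebra.TensorProduct.map (AlgHom.id k H)
      (Algebra.TensorProduct.includeLeft : H →ₐ[k] H ⊗[k] B))

@[simp] lemma S7.inclPhi_tmul (x y z : H) :
    (S7.inclPhi : (H ⊗[k] (H ⊗[k] H)) →ₐ[k] H ⊗[k] (H ⊗[k] (H ⊗[k] B)))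
        (x ⊗ₜ[k] (y ⊗ₜ[k] z))
      = x ⊗ₜ[k] (y ⊗ₜ[k] (z ⊗ₜ[k] (1 : B))) := by
  simp [S7.inclPhi]

/-- element form of the coassociativity axiom -/
lemma S7.coassocE (b : B) :
    S7.lamMap CB.coact (CB.coact b) * CB.Phil
      = CB.Phil * S7.coDup Q B (CB.coact b) := by
  obtain ⟨n, bm, b0, hb⟩ := S7.exists_repr (k := k) (CB.coact b)
  obtain ⟨m, d1, d2, hd⟩ := S7.exists_repr_fam (k := k) n (fun i => Q.comul (bm i))
  have key := CB.coassoc b n bm b0 hb m d1 d2 hd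
  have h1 : S7.lamMap CB.coact (CB.coact b) = ∑ i, bm i ⊗ₜ[k] CB.coact (b0 i) := by
    rw [hb, map_sum]; simp
  have h2 : S7.coDup Q B (CB.coact b) = ∑ i, ∑ j, d1 i j ⊗ₜ[k] (d2 i j ⊗ₜ[k] b0 i) := by
    rw [hb, map_sum]
    exact Finset.sum_congr rfl fun i _ => S7.coDup_tmul Q (bm i) (b0 i) (hd i)
  rw [h1, h2, key]

/-- element form of the counit axiom -/
lemma S7.counitalE (b : B) : S7.epsL Q B (CB.coact b) = b := by
  obtain ⟨n, bm, b0, hb⟩ := S7.exists_repr (k := k) (CB.coact b)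
  have key := CB.counital b n bm b0 hb
  rw [hb, map_sum]
  simpa [S7.epsL_tmul] using key

/-- element form of `Phil_normal_mid` -/
lemma S7.emid_Phil :
    Algebra.TensorProduct.map (AlgHom.id k H) (S7.epsL Q B) CB.Phil = 1 := by
  obtain ⟨n, L1, L2, L3, hL⟩ := S7.exists_repr3 (k := k) CB.Phil
  have key := CB.Phil_normal_mid n L1 L2 L3 hL
  rw [hL, map_sum]
  rw [show (1 : H ⊗[k] B) = ∑ i, Q.counit (L2 i) • (L1 i ⊗ₜ[k] L3 i) from key.symm]
  refine Finset.sum_congr rfl fun i _ => ?_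
  simp [S7.epsL_tmul, TensorProduct.tmul_smul]

/-- element form of `Phil_normal_left` -/
lemma S7.eleft_Phil : S7.epsL Q (H ⊗[k] B) CB.Phil = 1 := by
  obtain ⟨n, L1, L2, L3, hL⟩ := S7.exists_repr3 (k := k) CB.Phil
  have key := CB.Phil_normal_left n L1 L2 L3 hL
  rw [hL, map_sum]
  rw [show (1 : H ⊗[k] B) = ∑ i, Q.counit (L1 i) • (L2 i ⊗ₜ[k] L3 i) from key.symm]
  refine Finset.sum_congr rfl fun i _ => ?_
  simp [S7.epsL_tmul]

/-- element form of the pentagon axiom -/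
lemma S7.pentagonE :
    ((1 : H) ⊗ₜ[k] CB.Phil)
        * Algebra.TensorProduct.map (AlgHom.id k H) (S7.coDup Q B) CB.Phil
        * S7.inclPhi Q.Phi
      = Algebra.TensorProduct.map (AlgHom.id k H) (S7.lamMap CB.coact) CB.Phil
        * S7.coDup Q (H ⊗[k] B) CB.Phil := by
  obtain ⟨n, L1, L2, L3, hL⟩ := S7.exists_repr3 (k := k) CB.Phil
  obtain ⟨q, X1, X2, X3, hX⟩ := S7.exists_repr3 (k := k) Q.Phi
  obtain ⟨m, c1, c2, hc⟩ := S7.exists_repr_fam (k := k) n (fun i => Q.comul (L2 i))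
  obtain ⟨p, d1, d2, hd⟩ := S7.exists_repr_fam (k := k) n (fun i => Q.comul (L1 i))
  have key := CB.pentagon n L1 L2 L3 hL m c1 c2 hc p d1 d2 hd q X1 X2 X3 hX
  have h1 : Algebra.TensorProduct.map (AlgHom.id k H) (S7.coDup Q B) CB.Phil
      = ∑ i, ∑ j, L1 i ⊗ₜ[k] (c1 i j ⊗ₜ[k] (c2 i j ⊗ₜ[k] L3 i)) := by
    rw [hL, map_sum]
    refine Finset.sum_congr rfl fun i _ => ?_
    rw [Algebra.TensorProduct.map_tmul, AlgHom.id_apply,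
      S7.coDup_tmul Q (L2 i) (L3 i) (hc i), TensorProduct.tmul_sum]
  have h2 : (S7.inclPhi Q.Phi : H ⊗[k] (H ⊗[k] (H ⊗[k] B)))
      = ∑ a, X1 a ⊗ₜ[k] (X2 a ⊗ₜ[k] (X3 a ⊗ₜ[k] (1 : B))) := by
    rw [hX, map_sum]; simp
  have h3 : Algebra.TensorProduct.map (AlgHom.id k H) (S7.lamMap CB.coact) CB.Phil
      = ∑ i, L1 i ⊗ₜ[k] (L2 i ⊗ₜ[k] CB.coact (L3 i)) := by
    rw [hL, map_sum]; simp
  have h4 : S7.coDup Q (H ⊗[k] B) CB.Phil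
      = ∑ i, ∑ j, d1 i j ⊗ₜ[k] (d2 i j ⊗ₜ[k] (L2 i ⊗ₜ[k] L3 i)) := by
    rw [hL, map_sum]
    exact Finset.sum_congr rfl fun i _ =>
      S7.coDup_tmul Q (L1 i) (L2 i ⊗ₜ[k] L3 i) (hd i)
  rw [h1, h2, h3, h4]
  exact key

/-- lifted coassociativity: slot-1-passive version -/
lemma S7.claimA (v : H ⊗[k] B) :
    Algebra.TensorProduct.map (AlgHom.id k H) (S7.lamMap CB.coact) (S7.lamMap CB.coact v)
        * ((1 : H) ⊗ₜ[k] CB.Phil)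
      = ((1 : H) ⊗ₜ[k] CB.Phil)
        * Algebra.TensorProduct.map (AlgHom.id k H) (S7.coDup Q B) (S7.lamMap CB.coact v) := by
  induction v with
  | zero => simp only [map_zero, zero_mul, mul_zero]
  | add x y hx hy => simp only [map_add, add_mul, mul_add, hx, hy]
  | tmul h c =>
    simp only [S7.lamMap_tmul, Algebra.TensorProduct.map_tmul, AlgHom.id_apply,
      Algebra.TensorProduct.tmul_mul_tmul, one_mul, mul_one]
    rw [S7.coassocE Q CB c]

/-- commutation of `Φ ⊗ 1` with `1 ⊗ 1 ⊗ 1 ⊗ c` -/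
lemma S7.comm4 (w : H ⊗[k] (H ⊗[k] H)) (c : B) :
    (S7.inclPhi w : H ⊗[k] (H ⊗[k] (H ⊗[k] B)))
        * ((1 : H) ⊗ₜ[k] ((1 : H) ⊗ₜ[k] ((1 : H) ⊗ₜ[k] c)))
      = ((1 : H) ⊗ₜ[k] ((1 : H) ⊗ₜ[k] ((1 : H) ⊗ₜ[k] c))) * S7.inclPhi w := by
  obtain ⟨n, x, y, z, hw⟩ := S7.exists_repr3 (k := k) w
  rw [hw]
  simp only [map_sum, Finset.sum_mul, Finset.mul_sum]
  refine Finset.sum_congr rfl fun i _ => ?_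
  simp [Algebra.TensorProduct.tmul_mul_tmul]

/-- lifted quasi-coassociativity: slot-4-passive version -/
lemma S7.claimB (v : H ⊗[k] B) :
    Algebra.TensorProduct.map (AlgHom.id k H) (S7.coDup Q B) (S7.coDup Q B v)
        * S7.inclPhi Q.Phi
      = S7.inclPhi Q.Phi * S7.coDup Q (H ⊗[k] B) (S7.coDup Q B v) := by
  induction v with
  | zero => simp only [map_zero, zero_mul, mul_zero]
  | add x y hx hy => simp only [map_add, add_mul, mul_add, hx, hy]
  | tmul h c =>
    have hsplit : h ⊗ₜ[k] c = (h ⊗ₜ[k] (1 : B)) * ((1 : H) ⊗ₜ[k] c) := by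
      rw [Algebra.TensorProduct.tmul_mul_tmul, mul_one, one_mul]
    -- the `c`-part maps to `1 ⊗ 1 ⊗ 1 ⊗ c` under both maps
    have hc1 : S7.coDup Q B ((1 : H) ⊗ₜ[k] c) = (1 : H) ⊗ₜ[k] ((1 : H) ⊗ₜ[k] c) :=
      S7.coDup_one_tmul Q c
    have hc2 : Algebra.TensorProduct.map (AlgHom.id k H) (S7.coDup Q B)
        ((1 : H) ⊗ₜ[k] ((1 : H) ⊗ₜ[k] c))
        = (1 : H) ⊗ₜ[k] ((1 : H) ⊗ₜ[k] ((1 : H) ⊗ₜ[k] c)) := by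
      simp [hc1]
    have hc3 : S7.coDup Q (H ⊗[k] B) ((1 : H) ⊗ₜ[k] ((1 : H) ⊗ₜ[k] c))
        = (1 : H) ⊗ₜ[k] ((1 : H) ⊗ₜ[k] ((1 : H) ⊗ₜ[k] c)) :=
      S7.coDup_one_tmul Q _
    -- the `h`-part
    obtain ⟨n, d1, d2, hd⟩ := S7.exists_repr (k := k) (Q.comul h)
    obtain ⟨m, v1, v2, hv⟩ := S7.exists_repr_fam (k := k) n (fun i => Q.comul (d2 i))
    obtain ⟨p, u1, u2, hu⟩ := S7.exists_repr_fam (k := k) n (fun i => Q.comul (d1 i))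
    have hh1 : Algebra.TensorProduct.map (AlgHom.id k H) (S7.coDup Q B)
        (S7.coDup Q B (h ⊗ₜ[k] (1 : B)))
        = S7.inclPhi (Algebra.TensorProduct.map (AlgHom.id k H) Q.comul (Q.comul h)) := by
      rw [S7.coDup_tmul Q h (1 : B) hd, map_sum, hd, map_sum, map_sum]
      refine Finset.sum_congr rfl fun i _ => ?_
      rw [Algebra.TensorProduct.map_tmul, AlgHom.id_apply,
        S7.coDup_tmul Q (d2 i) (1 : B) (hv i), TensorProduct.tmul_sum,
        Algebra.TensorProduct.map_tmul, AlgHom.id_apply, hv i,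
        TensorProduct.tmul_sum, map_sum]
      refine Finset.sum_congr rfl fun j _ => ?_
      simp
    have hh2 : S7.coDup Q (H ⊗[k] B) (S7.coDup Q B (h ⊗ₜ[k] (1 : B)))
        = S7.inclPhi (S7.coDup Q H (Q.comul h)) := by
      rw [S7.coDup_tmul Q h (1 : B) hd, map_sum, hd, map_sum, map_sum]
      refine Finset.sum_congr rfl fun i _ => ?_
      rw [S7.coDup_tmul Q (d1 i) (d2 i ⊗ₜ[k] (1 : B)) (hu i),
        S7.coDup_tmul Q (d1 i) (d2 i) (hu i), map_sum]
      refine Finset.sum_congr rfl fun j _ => ?_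
      simp
    have hkey : S7.inclPhi (Algebra.TensorProduct.map (AlgHom.id k H) Q.comul (Q.comul h))
          * (S7.inclPhi Q.Phi : H ⊗[k] (H ⊗[k] (H ⊗[k] B)))
        = S7.inclPhi Q.Phi * S7.inclPhi (S7.coDup Q H (Q.comul h)) := by
      rw [← map_mul, ← map_mul, S7.quasi_coassocE Q h]
    -- assemble
    rw [hsplit, map_mul, map_mul, map_mul, hc1, hc2, hc3, hh1, hh2,
      mul_assoc, ← S7.comm4, ← mul_assoc, hkey, mul_assoc]
end S7CB

section S7Twist
variable {k H B : Type*} [Field k] [Ring H] [Algebra k H] [Ring B] [Algebra k B]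

lemma S7.cml {R : Type*} [Monoid R] {a b : R} (h : a * b = 1) (x : R) :
    a * (b * x) = x := by rw [← mul_assoc, h, one_mul]

variable {Q : QuasiBialgebra k H} (CB : LeftComoduleAlgebra Q B) (U Uinv : H ⊗[k] B)

/-- the twisted coaction `b ↦ U λ(b) U⁻¹` -/
noncomputable def S7.coact' (hU : U * Uinv = 1) (hU' : Uinv * U = 1) :
    B →ₐ[k] H ⊗[k] B where
  toFun b := U * CB.coact b * Uinv
  map_one' := by show U * CB.coact 1 * Uinv = 1; rw [map_one, mul_one, hU]
  map_mul' x y := by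
    show U * CB.coact (x * y) * Uinv = U * CB.coact x * Uinv * (U * CB.coact y * Uinv)
    simp only [map_mul, mul_assoc]
    rw [show Uinv * (U * (CB.coact y * Uinv)) = CB.coact y * Uinv from by
      rw [← mul_assoc, hU', one_mul]]
  map_zero' := by show U * CB.coact 0 * Uinv = 0; rw [map_zero, mul_zero, zero_mul]
  map_add' x y := by
    show U * CB.coact (x + y) * Uinv = U * CB.coact x * Uinv + U * CB.coact y * Uinv
    rw [map_add, mul_add, add_mul]
  commutes' r := by
    show U * CB.coact (algebraMap k B r) * Uinv = algebraMap k (H ⊗[k] B) r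
    rw [AlgHom.commutes, show U * algebraMap k (H ⊗[k] B) r
        = algebraMap k (H ⊗[k] B) r * U from (Algebra.commutes r U).symm,
      mul_assoc, hU, mul_one]

@[simp] lemma S7.coact'_apply (hU : U * Uinv = 1) (hU' : Uinv * U = 1) (b : B) :
    S7.coact' CB U Uinv hU hU' b = U * CB.coact b * Uinv := rfl

/-- the twisted reassociator -/
noncomputable def S7.Phil' : H ⊗[k] (H ⊗[k] B) :=
  ((1 : H) ⊗ₜ[k] U) * S7.lamMap CB.coact U * CB.Phil * S7.coDup Q B Uinv

/-- the inverse of the twisted reassociator -/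
noncomputable def S7.PhilInv' : H ⊗[k] (H ⊗[k] B) :=
  S7.coDup Q B U * CB.PhilInv * S7.lamMap CB.coact Uinv * ((1 : H) ⊗ₜ[k] Uinv)

lemma S7.Phil'_def : S7.Phil' CB U Uinv
    = ((1 : H) ⊗ₜ[k] U) * S7.lamMap CB.coact U * CB.Phil * S7.coDup Q B Uinv := rfl

lemma S7.hVV' (hU : U * Uinv = 1) : ((1 : H) ⊗ₜ[k] U) * ((1 : H) ⊗ₜ[k] Uinv) = (1 : H ⊗[k] (H ⊗[k] B)) := by
  rw [Algebra.TensorProduct.tmul_mul_tmul, one_mul, hU]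
  exact Algebra.TensorProduct.one_def.symm

lemma S7.hV'V (hU' : Uinv * U = 1) : ((1 : H) ⊗ₜ[k] Uinv) * ((1 : H) ⊗ₜ[k] U) = (1 : H ⊗[k] (H ⊗[k] B)) := by
  rw [Algebra.TensorProduct.tmul_mul_tmul, one_mul, hU']
  exact Algebra.TensorProduct.one_def.symm

lemma S7.Phil'_mul_inv (hU : U * Uinv = 1) (hU' : Uinv * U = 1) : S7.Phil' CB U Uinv * S7.PhilInv' CB U Uinv = 1 := by
  rw [S7.Phil', S7.PhilInv']
  simp only [mul_assoc]
  rw [S7.cml (show S7.coDup Q B Uinv * S7.coDup Q B U = 1 from by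
      rw [← map_mul, hU', map_one])]
  rw [S7.cml CB.Phil_mul_inv]
  rw [S7.cml (show S7.lamMap CB.coact U * S7.lamMap CB.coact Uinv = 1 from by
      rw [← map_mul, hU, map_one])]
  exact S7.hVV' U Uinv hU

lemma S7.PhilInv'_mul (hU : U * Uinv = 1) (hU' : Uinv * U = 1) : S7.PhilInv' CB U Uinv * S7.Phil' CB U Uinv = 1 := by
  rw [S7.Phil', S7.PhilInv']
  simp only [mul_assoc]
  rw [S7.cml (S7.hV'V U Uinv hU')]
  rw [S7.cml (show S7.lamMap CB.coact Uinv * S7.lamMap CB.coact U = 1 from by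
      rw [← map_mul, hU', map_one])]
  rw [S7.cml CB.Phil_inv_mul]
  rw [← map_mul, hU, map_one]

lemma S7.lam'_conj (hU : U * Uinv = 1) (hU' : Uinv * U = 1) (x : H ⊗[k] B) :
    S7.lamMap (S7.coact' CB U Uinv hU hU') x
      = ((1 : H) ⊗ₜ[k] U) * S7.lamMap CB.coact x * ((1 : H) ⊗ₜ[k] Uinv) := by
  induction x with
  | zero => simp only [map_zero, mul_zero, zero_mul]
  | add x y hx hy => rw [map_add, map_add, mul_add, add_mul, hx, hy]
  | tmul h c =>
    simp only [S7.lamMap_tmul, S7.coact'_apply, Algebra.TensorProduct.tmul_mul_tmul,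
      one_mul, mul_one, mul_assoc]

/-- coassociativity of the twisted structure -/
lemma S7.coassoc' (hU : U * Uinv = 1) (hU' : Uinv * U = 1) (b : B) :
    S7.lamMap (S7.coact' CB U Uinv hU hU') (S7.coact' CB U Uinv hU hU' b)
        * S7.Phil' CB U Uinv
      = S7.Phil' CB U Uinv
        * S7.coDup Q B (S7.coact' CB U Uinv hU hU' b) := by
  have hb : S7.coact' CB U Uinv hU hU' b = U * CB.coact b * Uinv := rfl
  rw [hb, S7.lam'_conj CB U Uinv hU hU', S7.Phil'_def]
  simp only [map_mul, mul_assoc]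
  rw [S7.cml (S7.hV'V U Uinv hU')]
  rw [S7.cml (show S7.lamMap CB.coact Uinv * S7.lamMap CB.coact U = 1 from by
      rw [← map_mul, hU', map_one])]
  rw [S7.cml (show S7.coDup Q B Uinv * S7.coDup Q B U = 1 from by
      rw [← map_mul, hU', map_one])]
  rw [show S7.lamMap CB.coact (CB.coact b) * (CB.Phil * S7.coDup Q B Uinv)
      = CB.Phil * (S7.coDup Q B (CB.coact b) * S7.coDup Q B Uinv) from by
    rw [← mul_assoc, S7.coassocE Q CB b, mul_assoc]]

lemma S7.epsU (hUc : ∀ (n : ℕ) (U1 : Fin n → H) (U2 : Fin n → B),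
      U = ∑ i, U1 i ⊗ₜ[k] U2 i → (∑ i, Q.counit (U1 i) • U2 i) = (1 : B)) :
    S7.epsL Q B U = 1 := by
  obtain ⟨n, U1, U2, h⟩ := S7.exists_repr (k := k) U
  rw [h, map_sum]
  rw [show (∑ i, S7.epsL Q B (U1 i ⊗ₜ[k] U2 i)) = ∑ i, Q.counit (U1 i) • U2 i from
    Finset.sum_congr rfl fun i _ => S7.epsL_tmul Q (U1 i) (U2 i)]
  exact hUc n U1 U2 h

lemma S7.epsUinv (hU : U * Uinv = 1) (hEU : S7.epsL Q B U = 1) : S7.epsL Q B Uinv = 1 := by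
  have h := congrArg (S7.epsL Q B) hU
  rw [map_mul, map_one, hEU, one_mul] at h
  exact h

/-- counit property of the twisted coaction -/
lemma S7.counital' (hU : U * Uinv = 1) (hU' : Uinv * U = 1) (hEU : S7.epsL Q B U = 1) (b : B) :
    S7.epsL Q B (S7.coact' CB U Uinv hU hU' b) = b := by
  rw [S7.coact'_apply, map_mul, map_mul, hEU, S7.epsUinv U Uinv hU hEU,
    S7.counitalE Q CB b, one_mul, mul_one]

lemma S7.emid_lamMap (v : H ⊗[k] B) :
    Algebra.TensorProduct.map (AlgHom.id k H) (S7.epsL Q B) (S7.lamMap CB.coact v) = v := by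
  induction v with
  | zero => simp
  | add x y hx hy => simp only [map_add, hx, hy]
  | tmul h c => rw [S7.lamMap_tmul, Algebra.TensorProduct.map_tmul, AlgHom.id_apply,
      S7.counitalE Q CB c]

lemma S7.emid_Phil' (hU : U * Uinv = 1) (hEU : S7.epsL Q B U = 1) :
    Algebra.TensorProduct.map (AlgHom.id k H) (S7.epsL Q B) (S7.Phil' CB U Uinv) = 1 := by
  rw [S7.Phil'_def]
  simp only [map_mul]
  rw [show Algebra.TensorProduct.map (AlgHom.id k H) (S7.epsL Q B) ((1 : H) ⊗ₜ[k] U) = 1 from by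
    rw [Algebra.TensorProduct.map_tmul, AlgHom.id_apply, hEU]
    exact Algebra.TensorProduct.one_def.symm]
  rw [S7.emid_lamMap CB U, S7.emid_Phil Q CB, S7.emid_coDup Q Uinv, one_mul, mul_one, hU]

lemma S7.eleft_lamMap (v : H ⊗[k] B) :
    S7.epsL Q (H ⊗[k] B) (S7.lamMap CB.coact v) = CB.coact (S7.epsL Q B v) := by
  induction v with
  | zero => simp
  | add x y hx hy => simp only [map_add, hx, hy]
  | tmul h c => rw [S7.lamMap_tmul, S7.epsL_tmul, S7.epsL_tmul, map_smul]

lemma S7.eleft_Phil' (hU : U * Uinv = 1) (hEU : S7.epsL Q B U = 1) :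
    S7.epsL Q (H ⊗[k] B) (S7.Phil' CB U Uinv) = 1 := by
  rw [S7.Phil'_def]
  simp only [map_mul]
  rw [show S7.epsL Q (H ⊗[k] B) ((1 : H) ⊗ₜ[k] U) = U from by
    rw [S7.epsL_tmul, map_one, one_smul]]
  rw [S7.eleft_lamMap CB U, hEU, map_one, S7.eleft_Phil Q CB, S7.eleft_coDup Q Uinv,
    mul_one, mul_one, hU]

end S7Twist

section S7Pentagon
variable {k H B : Type*} [Field k] [Ring H] [Algebra k H] [Ring B] [Algebra k B]
variable {Q : QuasiBialgebra k H} (CB : LeftComoduleAlgebra Q B) (U Uinv : H ⊗[k] B)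

lemma S7.one_tmul_mul (x y : H ⊗[k] (H ⊗[k] B)) :
    (1 : H) ⊗ₜ[k] (x * y) = ((1 : H) ⊗ₜ[k] x) * ((1 : H) ⊗ₜ[k] y) := by
  rw [Algebra.TensorProduct.tmul_mul_tmul, one_mul]

lemma S7.LLp_conj (hU : U * Uinv = 1) (hU' : Uinv * U = 1) (w : H ⊗[k] (H ⊗[k] B)) :
    Algebra.TensorProduct.map (AlgHom.id k H)
        (S7.lamMap (S7.coact' CB U Uinv hU hU')) w
      = ((1 : H) ⊗ₜ[k] ((1 : H) ⊗ₜ[k] U))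
        * Algebra.TensorProduct.map (AlgHom.id k H) (S7.lamMap CB.coact) w
        * ((1 : H) ⊗ₜ[k] ((1 : H) ⊗ₜ[k] Uinv)) := by
  induction w with
  | zero => simp only [map_zero, mul_zero, zero_mul]
  | add x y hx hy => rw [map_add, map_add, mul_add, add_mul, hx, hy]
  | tmul h x =>
    simp only [Algebra.TensorProduct.map_tmul, AlgHom.id_apply,
      S7.lam'_conj CB U Uinv hU hU' x, Algebra.TensorProduct.tmul_mul_tmul,
      one_mul, mul_one]

lemma S7.LL_coDup (v : H ⊗[k] B) :
    Algebra.TensorProduct.map (AlgHom.id k H) (S7.lamMap CB.coact) (S7.coDup Q B v)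
      = S7.coDup Q (H ⊗[k] B) (S7.lamMap CB.coact v) := by
  induction v with
  | zero => simp
  | add x y hx hy => simp only [map_add, hx, hy]
  | tmul h c =>
    obtain ⟨n, d1, d2, hd⟩ := S7.exists_repr (k := k) (Q.comul h)
    rw [S7.coDup_tmul Q h c hd, map_sum, S7.lamMap_tmul,
      S7.coDup_tmul Q h (CB.coact c) hd]
    refine Finset.sum_congr rfl fun i _ => ?_
    simp

/-- pentagon axiom for the twisted structure, map form -/
lemma S7.pentagon' (hU : U * Uinv = 1) (hU' : Uinv * U = 1) :
    ((1 : H) ⊗ₜ[k] S7.Phil' CB U Uinv)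
        * Algebra.TensorProduct.map (AlgHom.id k H) (S7.coDup Q B) (S7.Phil' CB U Uinv)
        * S7.inclPhi Q.Phi
      = Algebra.TensorProduct.map (AlgHom.id k H)
            (S7.lamMap (S7.coact' CB U Uinv hU hU')) (S7.Phil' CB U Uinv)
        * S7.coDup Q (H ⊗[k] B) (S7.Phil' CB U Uinv) := by
  have hMV : Algebra.TensorProduct.map (AlgHom.id k H) (S7.coDup Q B) ((1 : H) ⊗ₜ[k] U)
      = (1 : H) ⊗ₜ[k] S7.coDup Q B U := by
    rw [Algebra.TensorProduct.map_tmul, AlgHom.id_apply]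
  have hLV : Algebra.TensorProduct.map (AlgHom.id k H) (S7.lamMap CB.coact) ((1 : H) ⊗ₜ[k] U)
      = (1 : H) ⊗ₜ[k] S7.lamMap CB.coact U := by
    rw [Algebra.TensorProduct.map_tmul, AlgHom.id_apply]
  have hDV : S7.coDup Q (H ⊗[k] B) ((1 : H) ⊗ₜ[k] U)
      = (1 : H) ⊗ₜ[k] ((1 : H) ⊗ₜ[k] U) := S7.coDup_one_tmul Q U
  have c1 : ((1 : H) ⊗ₜ[k] S7.coDup Q B Uinv) * ((1 : H) ⊗ₜ[k] S7.coDup Q B U)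
      = (1 : H ⊗[k] (H ⊗[k] (H ⊗[k] B))) := by
    rw [Algebra.TensorProduct.tmul_mul_tmul, one_mul, ← map_mul, hU', map_one]
    exact Algebra.TensorProduct.one_def.symm
  have c2 : S7.coDup Q (H ⊗[k] B) (S7.lamMap CB.coact Uinv)
        * S7.coDup Q (H ⊗[k] B) (S7.lamMap CB.coact U) = 1 := by
    rw [← map_mul, ← map_mul, hU', map_one, map_one]
  have c3 : ((1 : H) ⊗ₜ[k] ((1 : H) ⊗ₜ[k] Uinv)) * ((1 : H) ⊗ₜ[k] ((1 : H) ⊗ₜ[k] U))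
      = (1 : H ⊗[k] (H ⊗[k] (H ⊗[k] B))) := by
    rw [Algebra.TensorProduct.tmul_mul_tmul, one_mul, S7.hV'V U Uinv hU']
    exact Algebra.TensorProduct.one_def.symm
  have h1 : ∀ X : H ⊗[k] (H ⊗[k] (H ⊗[k] B)),
      ((1 : H) ⊗ₜ[k] CB.Phil)
          * (Algebra.TensorProduct.map (AlgHom.id k H) (S7.coDup Q B)
              (S7.lamMap CB.coact U) * X)
        = Algebra.TensorProduct.map (AlgHom.id k H) (S7.lamMap CB.coact)
            (S7.lamMap CB.coact U) * (((1 : H) ⊗ₜ[k] CB.Phil) * X) := fun X => by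
    rw [show ((1 : H) ⊗ₜ[k] CB.Phil)
          * (Algebra.TensorProduct.map (AlgHom.id k H) (S7.coDup Q B)
              (S7.lamMap CB.coact U) * X)
        = (((1 : H) ⊗ₜ[k] CB.Phil)
            * Algebra.TensorProduct.map (AlgHom.id k H) (S7.coDup Q B)
                (S7.lamMap CB.coact U)) * X from (mul_assoc _ _ _).symm,
      ← S7.claimA Q CB U]
    simp only [mul_assoc]
  have h3 : ∀ X : H ⊗[k] (H ⊗[k] (H ⊗[k] B)),
      ((1 : H) ⊗ₜ[k] CB.Phil)
          * (Algebra.TensorProduct.map (AlgHom.id k H) (S7.coDup Q B) CB.Phil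
              * (S7.inclPhi Q.Phi * X))
        = Algebra.TensorProduct.map (AlgHom.id k H) (S7.lamMap CB.coact) CB.Phil
            * (S7.coDup Q (H ⊗[k] B) CB.Phil * X) := fun X => by
    rw [show ((1 : H) ⊗ₜ[k] CB.Phil)
          * (Algebra.TensorProduct.map (AlgHom.id k H) (S7.coDup Q B) CB.Phil
              * (S7.inclPhi Q.Phi * X))
        = (((1 : H) ⊗ₜ[k] CB.Phil)
            * Algebra.TensorProduct.map (AlgHom.id k H) (S7.coDup Q B) CB.Phil
            * S7.inclPhi Q.Phi) * X from by simp only [mul_assoc],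
      S7.pentagonE Q CB]
    simp only [mul_assoc]
  -- normalize the right-hand side
  rw [S7.LLp_conj CB U Uinv hU hU' (S7.Phil' CB U Uinv)]
  rw [S7.Phil'_def CB U Uinv]
  simp only [map_mul, one_tmul_mul]
  rw [hMV, hLV, hDV, S7.LL_coDup CB Uinv]
  simp only [mul_assoc]
  rw [S7.cml c3, S7.cml c2, S7.cml c1]
  rw [S7.claimB Q Uinv]
  rw [h1, h3]
end S7Pentagon

section S7Iso
variable {k H A B : Type*} [Field k] [Ring H] [Algebra k H]
  [AddCommGroup A] [Module k A] [Ring B] [Algebra k B]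
variable {Q : QuasiBialgebra k H} (MA : LeftModuleAlgebra Q A)

/-- the action of `H ⊗ B` on `A ⊗ B` via the module structure on `A` and
left multiplication on `B` -/
noncomputable def S7.mu : (H ⊗[k] B) →ₗ[k] (A ⊗[k] B) →ₗ[k] (A ⊗[k] B) :=
  TensorProduct.lift <| LinearMap.mk₂ k
    (fun h c => TensorProduct.map (MA.act h) (LinearMap.mulLeft k c))
    (fun h h' c => by rw [map_add, TensorProduct.map_add_left])
    (fun s h c => by rw [map_smul, TensorProduct.map_smul_left])
    (fun h c c' => by
      rw [show LinearMap.mulLeft k (c + c') = LinearMap.mulLeft k c + LinearMap.mulLeft k c'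
          from LinearMap.ext fun x => add_mul c c' x, TensorProduct.map_add_right])
    (fun s h c => by
      rw [show LinearMap.mulLeft k (s • c) = s • LinearMap.mulLeft k c
          from LinearMap.ext fun x => smul_mul_assoc s c x, TensorProduct.map_smul_right])

@[simp] lemma S7.mu_tmul (h : H) (c : B) (a : A) (b : B) :
    S7.mu MA (h ⊗ₜ[k] c) (a ⊗ₜ[k] b) = MA.act h a ⊗ₜ[k] (c * b) := by
  simp [S7.mu]

lemma S7.mu_one (x : A ⊗[k] B) : S7.mu MA (1 : H ⊗[k] B) x = x := by
  induction x with
  | zero => simp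
  | add x y hx hy => rw [map_add, hx, hy]
  | tmul a b =>
    rw [Algebra.TensorProduct.one_def, S7.mu_tmul, MA.one_act, one_mul]

lemma S7.mu_mul (x y : H ⊗[k] B) (z : A ⊗[k] B) :
    S7.mu MA (x * y) z = S7.mu MA x (S7.mu MA y z) := by
  induction x with
  | zero => simp
  | add x1 x2 h1 h2 => rw [add_mul, map_add, map_add, LinearMap.add_apply,
      LinearMap.add_apply, h1, h2]
  | tmul h c =>
    induction y with
    | zero => simp
    | add y1 y2 h1 h2 => rw [mul_add, map_add, map_add, LinearMap.add_apply,
        LinearMap.add_apply, map_add, h1, h2]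
    | tmul h' c' =>
      induction z with
      | zero => simp
      | add z1 z2 h1 h2 => rw [map_add, map_add, map_add, h1, h2]
      | tmul a b =>
        rw [Algebra.TensorProduct.tmul_mul_tmul, S7.mu_tmul, S7.mu_tmul, S7.mu_tmul,
          MA.mul_act, mul_assoc]

/-- the trilinear gadget computing the smash multiplication -/
noncomputable def S7.Gm (a a' : A) (b' : B) : (H ⊗[k] (H ⊗[k] B)) →ₗ[k] A ⊗[k] B :=
  TensorProduct.lift <| LinearMap.mk₂ k
    (fun h z => TensorProduct.map
      ((MA.mul (MA.act h a)).comp ((MA.act).flip a')) (LinearMap.mulRight k b') z)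
    (fun h h' z => by
      rw [map_add, LinearMap.add_apply, map_add, LinearMap.add_comp,
        TensorProduct.map_add_left, LinearMap.add_apply])
    (fun s h z => by
      rw [map_smul, LinearMap.smul_apply, map_smul, LinearMap.smul_comp,
        TensorProduct.map_smul_left, LinearMap.smul_apply])
    (fun h z z' => by rw [map_add])
    (fun s h z => by rw [map_smul])

@[simp] lemma S7.Gm_tmul (a a' : A) (b' : B) (y1 y2 : H) (y3 : B) :
    S7.Gm MA a a' b' (y1 ⊗ₜ[k] (y2 ⊗ₜ[k] y3))
      = MA.mul (MA.act y1 a) (MA.act y2 a') ⊗ₜ[k] (y3 * b') := by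
  simp [S7.Gm]

lemma S7.Gm_shift1 (h : H) (a a' : A) (b' : B) (w : H ⊗[k] (H ⊗[k] B)) :
    S7.Gm MA (MA.act h a) a' b' w
      = S7.Gm MA a a' b' (w * (h ⊗ₜ[k] (1 : H ⊗[k] B))) := by
  obtain ⟨n, y1, y2, y3, hw⟩ := S7.exists_repr3 (k := k) w
  rw [hw, map_sum, Finset.sum_mul, map_sum]
  refine Finset.sum_congr rfl fun i _ => ?_
  rw [Algebra.TensorProduct.tmul_mul_tmul, mul_one, S7.Gm_tmul, S7.Gm_tmul, MA.mul_act]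

lemma S7.Gm_shift2 (h : H) (a a' : A) (b' : B) (w : H ⊗[k] (H ⊗[k] B)) :
    S7.Gm MA a (MA.act h a') b' w
      = S7.Gm MA a a' b' (w * ((1 : H) ⊗ₜ[k] (h ⊗ₜ[k] (1 : B)))) := by
  obtain ⟨n, y1, y2, y3, hw⟩ := S7.exists_repr3 (k := k) w
  rw [hw, map_sum, Finset.sum_mul, map_sum]
  refine Finset.sum_congr rfl fun i _ => ?_
  rw [Algebra.TensorProduct.tmul_mul_tmul, Algebra.TensorProduct.tmul_mul_tmul,
    mul_one, mul_one, S7.Gm_tmul, S7.Gm_tmul, MA.mul_act]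

lemma S7.Gm_shift3 (c : B) (a a' : A) (b' : B) (w : H ⊗[k] (H ⊗[k] B)) :
    S7.Gm MA a a' (c * b') w
      = S7.Gm MA a a' b' (w * ((1 : H) ⊗ₜ[k] ((1 : H) ⊗ₜ[k] c))) := by
  obtain ⟨n, y1, y2, y3, hw⟩ := S7.exists_repr3 (k := k) w
  rw [hw, map_sum, Finset.sum_mul, map_sum]
  refine Finset.sum_congr rfl fun i _ => ?_
  rw [Algebra.TensorProduct.tmul_mul_tmul, Algebra.TensorProduct.tmul_mul_tmul,
    mul_one, mul_one, S7.Gm_tmul, S7.Gm_tmul, mul_assoc]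

/-- pushing the `μ`-action inside the gadget -/
lemma S7.mu_Gm (x : H ⊗[k] B) (a a' : A) (b' : B) (w : H ⊗[k] (H ⊗[k] B)) :
    S7.mu MA x (S7.Gm MA a a' b' w) = S7.Gm MA a a' b' (S7.coDup Q B x * w) := by
  induction x with
  | zero => simp
  | add x1 x2 h1 h2 => rw [map_add, LinearMap.add_apply, map_add, add_mul, map_add, h1, h2]
  | tmul h c =>
    obtain ⟨m, y1, y2, y3, hw⟩ := S7.exists_repr3 (k := k) w
    obtain ⟨n, d1, d2, hd⟩ := S7.exists_repr (k := k) (Q.comul h)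
    conv_lhs => rw [hw]
    rw [map_sum, map_sum, S7.coDup_tmul Q h c hd, Finset.sum_mul, map_sum]
    calc ∑ i, S7.mu MA (h ⊗ₜ[k] c) (S7.Gm MA a a' b' (y1 i ⊗ₜ[k] (y2 i ⊗ₜ[k] y3 i)))
        = ∑ i, ∑ j, MA.mul (MA.act (d1 j) (MA.act (y1 i) a))
            (MA.act (d2 j) (MA.act (y2 i) a')) ⊗ₜ[k] (c * (y3 i * b')) := by
          refine Finset.sum_congr rfl fun i _ => ?_
          rw [S7.Gm_tmul, S7.mu_tmul,
            MA.act_distrib h (MA.act (y1 i) a) (MA.act (y2 i) a') n d1 d2 hd,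
            TensorProduct.sum_tmul]
      _ = ∑ i, ∑ j, S7.Gm MA a a' b'
            ((d1 j ⊗ₜ[k] (d2 j ⊗ₜ[k] c)) * (y1 i ⊗ₜ[k] (y2 i ⊗ₜ[k] y3 i))) := by
          refine Finset.sum_congr rfl fun i _ => Finset.sum_congr rfl fun j _ => ?_
          rw [Algebra.TensorProduct.tmul_mul_tmul, Algebra.TensorProduct.tmul_mul_tmul,
            S7.Gm_tmul, MA.mul_act, MA.mul_act, mul_assoc]
      _ = ∑ j, S7.Gm MA a a' b'
            ((d1 j ⊗ₜ[k] (d2 j ⊗ₜ[k] c)) * ∑ i, y1 i ⊗ₜ[k] (y2 i ⊗ₜ[k] y3 i)) := by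
          rw [Finset.sum_comm]
          refine Finset.sum_congr rfl fun j _ => ?_
          rw [Finset.mul_sum, map_sum]
      _ = ∑ j, S7.Gm MA a a' b'
            ((d1 j ⊗ₜ[k] (d2 j ⊗ₜ[k] c)) * w) := by rw [← hw]

/-- the smash product multiplication in closed form -/
lemma S7.IsGSMmul_eq {CBX : LeftComoduleAlgebra Q B}
    {mul : A ⊗[k] B →ₗ[k] A ⊗[k] B →ₗ[k] A ⊗[k] B}
    (hm : IsGSMmul Q MA CBX mul) (a a' : A) (b b' : B) :
    mul (a ⊗ₜ[k] b) (a' ⊗ₜ[k] b')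
      = S7.Gm MA a a' b' (CBX.PhilInv * ((1 : H) ⊗ₜ[k] CBX.coact b)) := by
  obtain ⟨n, y1, y2, y3, hP⟩ := S7.exists_repr3 (k := k) CBX.PhilInv
  obtain ⟨m, bm, b0, hb⟩ := S7.exists_repr (k := k) (CBX.coact b)
  rw [hm a a' b b' n y1 y2 y3 hP m bm b0 hb, hP, hb, TensorProduct.tmul_sum,
    Finset.sum_mul]
  rw [map_sum]
  refine Finset.sum_congr rfl fun i _ => ?_
  rw [Finset.mul_sum, map_sum]
  refine Finset.sum_congr rfl fun j _ => ?_
  rw [Algebra.TensorProduct.tmul_mul_tmul, Algebra.TensorProduct.tmul_mul_tmul,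
    mul_one, S7.Gm_tmul, mul_assoc]

lemma S7.mu_one_left (x : H ⊗[k] B) (b : B) :
    S7.mu MA x (MA.one ⊗ₜ[k] b) = MA.one ⊗ₜ[k] (S7.epsL Q B x * b) := by
  induction x with
  | zero => simp
  | add x1 x2 h1 h2 => simp only [map_add, LinearMap.add_apply, h1, h2, add_mul,
      TensorProduct.tmul_add]
  | tmul h c =>
    rw [S7.mu_tmul, MA.act_unit, S7.epsL_tmul, smul_mul_assoc,
      TensorProduct.tmul_smul, TensorProduct.smul_tmul']
end S7Iso

section S7Key
variable {k H A B : Type*} [Field k] [Ring H] [Algebra k H]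
  [AddCommGroup A] [Module k A] [Ring B] [Algebra k B]
variable {Q : QuasiBialgebra k H}

lemma S7.PhilInv'_def (CB : LeftComoduleAlgebra Q B) (U Uinv : H ⊗[k] B) :
    S7.PhilInv' CB U Uinv
      = S7.coDup Q B U * CB.PhilInv * S7.lamMap CB.coact Uinv
          * ((1 : H) ⊗ₜ[k] Uinv) := rfl

/-- the key exchange identity -/
lemma S7.keyI (CB : LeftComoduleAlgebra Q B) (U Uinv : H ⊗[k] B)
    (hU : U * Uinv = 1) (hU' : Uinv * U = 1) (b : B) :
    S7.coDup Q B U * (CB.PhilInv * ((1 : H) ⊗ₜ[k] CB.coact b))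
      = S7.PhilInv' CB U Uinv
          * S7.lamMap (S7.coact' CB U Uinv hU hU') (U * ((1 : H) ⊗ₜ[k] b))
          * ((1 : H) ⊗ₜ[k] U) := by
  rw [S7.PhilInv'_def, S7.lam'_conj CB U Uinv hU hU' (U * ((1 : H) ⊗ₜ[k] b)),
    map_mul, S7.lamMap_tmul]
  simp only [mul_assoc]
  rw [S7.hV'V U Uinv hU', mul_one]
  rw [S7.cml (S7.hV'V U Uinv hU')]
  rw [S7.cml (show S7.lamMap CB.coact Uinv * S7.lamMap CB.coact U = 1 from by
    rw [← map_mul, hU', map_one])]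

variable (MA : LeftModuleAlgebra Q A)

/-- multiplicativity of the twisting map -/
lemma S7.F_mul (CB : LeftComoduleAlgebra Q B) (U Uinv : H ⊗[k] B)
    (hU : U * Uinv = 1) (hU' : Uinv * U = 1)
    (CB' : LeftComoduleAlgebra Q B)
    (hco : CB'.coact = S7.coact' CB U Uinv hU hU')
    (hPinv : CB'.PhilInv = S7.PhilInv' CB U Uinv)
    (mul mul' : A ⊗[k] B →ₗ[k] A ⊗[k] B →ₗ[k] A ⊗[k] B)
    (hm : IsGSMmul Q MA CB mul) (hm' : IsGSMmul Q MA CB' mul')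
    (x y : A ⊗[k] B) :
    S7.mu MA U (mul x y) = mul' (S7.mu MA U x) (S7.mu MA U y) := by
  obtain ⟨nU, U1, U2, hUr⟩ := S7.exists_repr (k := k) U
  have hxa : ∀ (a : A) (b : B), S7.mu MA U (a ⊗ₜ[k] b)
      = ∑ s, MA.act (U1 s) a ⊗ₜ[k] (U2 s * b) := fun a b => by
    conv_lhs => rw [hUr]
    rw [map_sum, LinearMap.sum_apply]
    exact Finset.sum_congr rfl fun s _ => S7.mu_tmul MA (U1 s) (U2 s) a b
  induction x with
  | zero => simp
  | add x1 x2 h1 h2 => simp only [map_add, LinearMap.add_apply, h1, h2]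
  | tmul a b =>
    induction y with
    | zero => simp
    | add y1 y2 h1 h2 => simp only [map_add, h1, h2]
    | tmul a' b' =>
      rw [S7.IsGSMmul_eq MA hm a a' b b', S7.mu_Gm, S7.keyI CB U Uinv hU hU' b]
      rw [hxa a b, hxa a' b']
      have hstep : ∀ s t, mul' (MA.act (U1 s) a ⊗ₜ[k] (U2 s * b))
          (MA.act (U1 t) a' ⊗ₜ[k] (U2 t * b'))
          = S7.Gm MA a a' b'
              ((S7.PhilInv' CB U Uinv
                  * (U1 s ⊗ₜ[k] S7.coact' CB U Uinv hU hU' (U2 s * b)))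
                * ((1 : H) ⊗ₜ[k] (U1 t ⊗ₜ[k] U2 t))) := fun s t => by
        rw [S7.IsGSMmul_eq MA hm', hco, hPinv, S7.Gm_shift1, S7.Gm_shift2, S7.Gm_shift3]
        congr 1
        simp only [mul_assoc, Algebra.TensorProduct.tmul_mul_tmul, one_mul, mul_one]
      have expand : mul' (∑ s, MA.act (U1 s) a ⊗ₜ[k] (U2 s * b))
          (∑ t, MA.act (U1 t) a' ⊗ₜ[k] (U2 t * b'))
          = ∑ s, ∑ t, mul' (MA.act (U1 s) a ⊗ₜ[k] (U2 s * b))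
              (MA.act (U1 t) a' ⊗ₜ[k] (U2 t * b')) := by
        rw [map_sum mul' (fun s => MA.act (U1 s) a ⊗ₜ[k] (U2 s * b)) Finset.univ,
          LinearMap.sum_apply]
        exact Finset.sum_congr rfl fun s _ =>
          map_sum (mul' (MA.act (U1 s) a ⊗ₜ[k] (U2 s * b)))
            (fun t => MA.act (U1 t) a' ⊗ₜ[k] (U2 t * b')) Finset.univ
      rw [expand]
      rw [show (∑ s, ∑ t, mul' (MA.act (U1 s) a ⊗ₜ[k] (U2 s * b))
            (MA.act (U1 t) a' ⊗ₜ[k] (U2 t * b')))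
          = ∑ s, ∑ t, S7.Gm MA a a' b'
              ((S7.PhilInv' CB U Uinv
                  * (U1 s ⊗ₜ[k] S7.coact' CB U Uinv hU hU' (U2 s * b)))
                * ((1 : H) ⊗ₜ[k] (U1 t ⊗ₜ[k] U2 t))) from
        Finset.sum_congr rfl fun s _ => Finset.sum_congr rfl fun t _ => hstep s t]
      rw [show (∑ s, ∑ t, S7.Gm MA a a' b'
              ((S7.PhilInv' CB U Uinv
                  * (U1 s ⊗ₜ[k] S7.coact' CB U Uinv hU hU' (U2 s * b)))
                * ((1 : H) ⊗ₜ[k] (U1 t ⊗ₜ[k] U2 t))))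
          = S7.Gm MA a a' b'
              ((∑ s, S7.PhilInv' CB U Uinv
                  * (U1 s ⊗ₜ[k] S7.coact' CB U Uinv hU hU' (U2 s * b)))
                * ((1 : H) ⊗ₜ[k] U)) from by
        rw [Finset.sum_mul, map_sum]
        refine Finset.sum_congr rfl fun s _ => ?_
        rw [← map_sum, ← Finset.mul_sum, ← TensorProduct.tmul_sum, ← hUr]]
      have hLU : S7.lamMap (S7.coact' CB U Uinv hU hU') (U * ((1 : H) ⊗ₜ[k] b))
          = ∑ s, U1 s ⊗ₜ[k] S7.coact' CB U Uinv hU hU' (U2 s * b) := by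
        rw [show U * ((1 : H) ⊗ₜ[k] b) = ∑ s, U1 s ⊗ₜ[k] (U2 s * b) from by
          rw [hUr, Finset.sum_mul]
          exact Finset.sum_congr rfl fun s _ => by
            rw [Algebra.TensorProduct.tmul_mul_tmul, mul_one]]
        rw [map_sum]
        exact Finset.sum_congr rfl fun s _ => S7.lamMap_tmul _ _ _
      rw [← Finset.mul_sum, ← hLU]
end S7Key

/-- twisting a left comodule algebra by an invertible `U ∈ H ⊗ 𝔅`
with `(ε⊗id)(U) = 1` yields a left comodule algebra `𝔅'`, and
`a ▸< b ↦ U¹·a ▸< U²b` is an algebra isomorphism `A ▸< 𝔅 → A ▸< 𝔅'` which is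
the identity on `1_A ▸< 𝔅`. -/
theorem statement_7 {k H A B : Type*} [Field k] [Ring H] [Algebra k H]
    [AddCommGroup A] [Module k A] [Ring B] [Algebra k B]
    (Q : QuasiBialgebra k H) (MA : LeftModuleAlgebra Q A)
    (CB : LeftComoduleAlgebra Q B)
    (U Uinv : H ⊗[k] B)
    (hU : U * Uinv = 1) (hU' : Uinv * U = 1)
    (hUcounit : ∀ (n : ℕ) (U1 : Fin n → H) (U2 : Fin n → B),
      U = ∑ i, U1 i ⊗ₜ[k] U2 i → (∑ i, Q.counit (U1 i) • U2 i) = (1 : B)) :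
    ∃ CB' : LeftComoduleAlgebra Q B,
      (∀ b : B, CB'.coact b = U * CB.coact b * Uinv)
      ∧ (∀ (n : ℕ) (U1 : Fin n → H) (U2 : Fin n → B), U = ∑ i, U1 i ⊗ₜ[k] U2 i →
         ∀ (m : ℕ) (V1 : Fin m → H) (V2 : Fin m → B), Uinv = ∑ j, V1 j ⊗ₜ[k] V2 j →
         ∀ (p : ℕ) (W1 W2 : Fin m → Fin p → H),
           (∀ j, Q.comul (V1 j) = ∑ l, W1 j l ⊗ₜ[k] W2 j l) →
           CB'.Phil = ((1 : H) ⊗ₜ[k] U) * (∑ i, U1 i ⊗ₜ[k] CB.coact (U2 i)) * CB.Phil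
             * (∑ j, ∑ l, W1 j l ⊗ₜ[k] (W2 j l ⊗ₜ[k] V2 j)))
      ∧ (∀ (mul mul' : A ⊗[k] B →ₗ[k] A ⊗[k] B →ₗ[k] A ⊗[k] B),
          IsGSMmul Q MA CB mul → IsGSMmul Q MA CB' mul' →
          ∃ F : (A ⊗[k] B) ≃ₗ[k] A ⊗[k] B,
            (∀ (a : A) (b : B) (n : ℕ) (U1 : Fin n → H) (U2 : Fin n → B),
              U = ∑ i, U1 i ⊗ₜ[k] U2 i →
              F (a ⊗ₜ[k] b) = ∑ i, MA.act (U1 i) a ⊗ₜ[k] (U2 i * b))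
            ∧ (∀ x y, F (mul x y) = mul' (F x) (F y))
            ∧ (∀ b : B, F (MA.one ⊗ₜ[k] b) = MA.one ⊗ₜ[k] b)) := by
  have hEU : S7.epsL Q B U = 1 := S7.epsU U hUcounit
  refine ⟨{
      coact := S7.coact' CB U Uinv hU hU'
      Phil := S7.Phil' CB U Uinv
      PhilInv := S7.PhilInv' CB U Uinv
      Phil_mul_inv := S7.Phil'_mul_inv CB U Uinv hU hU'
      Phil_inv_mul := S7.PhilInv'_mul CB U Uinv hU hU'
      coassoc := ?_
      pentagon := ?_
      counital := ?_
      Phil_normal_mid := ?_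
      Phil_normal_left := ?_ }, fun b => rfl, ?_, ?_⟩
  · -- coassoc
    intro b n bm b0 hb m d1 d2 hd
    have e1 : S7.lamMap (S7.coact' CB U Uinv hU hU') (S7.coact' CB U Uinv hU hU' b)
        = ∑ i, bm i ⊗ₜ[k] S7.coact' CB U Uinv hU hU' (b0 i) := by
      rw [hb, map_sum]
      exact Finset.sum_congr rfl fun i _ => S7.lamMap_tmul _ _ _
    have e2 : S7.coDup Q B (S7.coact' CB U Uinv hU hU' b)
        = ∑ i, ∑ j, d1 i j ⊗ₜ[k] (d2 i j ⊗ₜ[k] b0 i) := by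
      rw [hb, map_sum]
      exact Finset.sum_congr rfl fun i _ => S7.coDup_tmul Q (bm i) (b0 i) (hd i)
    rw [← e1, ← e2]
    exact S7.coassoc' CB U Uinv hU hU' b
  · -- pentagon
    intro n L1 L2 L3 hL m c1 c2 hc p d1 d2 hd q X1 X2 X3 hX
    have e1 : Algebra.TensorProduct.map (AlgHom.id k H) (S7.coDup Q B)
          (S7.Phil' CB U Uinv)
        = ∑ i, ∑ j, L1 i ⊗ₜ[k] (c1 i j ⊗ₜ[k] (c2 i j ⊗ₜ[k] L3 i)) := by
      rw [hL, map_sum]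
      refine Finset.sum_congr rfl fun i _ => ?_
      rw [Algebra.TensorProduct.map_tmul, AlgHom.id_apply,
        S7.coDup_tmul Q (L2 i) (L3 i) (hc i), TensorProduct.tmul_sum]
    have e2 : (S7.inclPhi Q.Phi : H ⊗[k] (H ⊗[k] (H ⊗[k] B)))
        = ∑ a, X1 a ⊗ₜ[k] (X2 a ⊗ₜ[k] (X3 a ⊗ₜ[k] (1 : B))) := by
      rw [hX, map_sum]; simp
    have e3 : Algebra.TensorProduct.map (AlgHom.id k H)
          (S7.lamMap (S7.coact' CB U Uinv hU hU')) (S7.Phil' CB U Uinv)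
        = ∑ i, L1 i ⊗ₜ[k] (L2 i ⊗ₜ[k] S7.coact' CB U Uinv hU hU' (L3 i)) := by
      rw [hL, map_sum]; simp [S7.lamMap_tmul]
    have e4 : S7.coDup Q (H ⊗[k] B) (S7.Phil' CB U Uinv)
        = ∑ i, ∑ j, d1 i j ⊗ₜ[k] (d2 i j ⊗ₜ[k] (L2 i ⊗ₜ[k] L3 i)) := by
      rw [hL, map_sum]
      exact Finset.sum_congr rfl fun i _ =>
        S7.coDup_tmul Q (L1 i) (L2 i ⊗ₜ[k] L3 i) (hd i)
    rw [← e1, ← e2, ← e3, ← e4]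
    exact S7.pentagon' CB U Uinv hU hU'
  · -- counital
    intro b n bm b0 hb
    have e : S7.epsL Q B (S7.coact' CB U Uinv hU hU' b)
        = ∑ i, Q.counit (bm i) • b0 i := by
      rw [hb, map_sum]
      exact Finset.sum_congr rfl fun i _ => S7.epsL_tmul Q (bm i) (b0 i)
    rw [← e]
    exact S7.counital' CB U Uinv hU hU' hEU b
  · -- Phil_normal_mid
    intro n L1 L2 L3 hL
    have e : Algebra.TensorProduct.map (AlgHom.id k H) (S7.epsL Q B)
          (S7.Phil' CB U Uinv)
        = ∑ i, Q.counit (L2 i) • (L1 i ⊗ₜ[k] L3 i) := by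
      rw [hL, map_sum]
      refine Finset.sum_congr rfl fun i _ => ?_
      rw [Algebra.TensorProduct.map_tmul, AlgHom.id_apply, S7.epsL_tmul,
        TensorProduct.tmul_smul]
    rw [← e]
    exact S7.emid_Phil' CB U Uinv hU hEU
  · -- Phil_normal_left
    intro n L1 L2 L3 hL
    have e : S7.epsL Q (H ⊗[k] B) (S7.Phil' CB U Uinv)
        = ∑ i, Q.counit (L1 i) • (L2 i ⊗ₜ[k] L3 i) := by
      rw [hL, map_sum]
      exact Finset.sum_congr rfl fun i _ => S7.epsL_tmul Q (L1 i) (L2 i ⊗ₜ[k] L3 i)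
    rw [← e]
    exact S7.eleft_Phil' CB U Uinv hU hEU
  · -- description of Phil'
    intro n U1 U2 hU1 m V1 V2 hV1 p W1 W2 hW
    have e1 : (∑ i, U1 i ⊗ₜ[k] CB.coact (U2 i)) = S7.lamMap CB.coact U := by
      rw [hU1, map_sum]
      exact Finset.sum_congr rfl fun i _ => (S7.lamMap_tmul _ _ _).symm
    have e2 : (∑ j, ∑ l, W1 j l ⊗ₜ[k] (W2 j l ⊗ₜ[k] V2 j)) = S7.coDup Q B Uinv := by
      rw [hV1, map_sum]
      exact Finset.sum_congr rfl fun j _ => (S7.coDup_tmul Q (V1 j) (V2 j) (hW j)).symm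
    rw [e1, e2]
    rfl
  · -- the isomorphism
    intro mul mul' hm hm'
    refine ⟨LinearEquiv.ofLinear (S7.mu MA U) (S7.mu MA Uinv)
      (LinearMap.ext fun z => by
        rw [LinearMap.comp_apply, ← S7.mu_mul, hU, S7.mu_one, LinearMap.id_apply])
      (LinearMap.ext fun z => by
        rw [LinearMap.comp_apply, ← S7.mu_mul, hU', S7.mu_one, LinearMap.id_apply]),
      ?_, ?_, ?_⟩
    · intro a b n U1 U2 hUrep
      rw [LinearEquiv.ofLinear_apply]
      conv_lhs => rw [hUrep]
      rw [map_sum, LinearMap.sum_apply]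
      exact Finset.sum_congr rfl fun i _ => S7.mu_tmul MA (U1 i) (U2 i) a b
    · intro x y
      simp only [LinearEquiv.ofLinear_apply]
      exact S7.F_mul MA CB U Uinv hU hU' _ rfl rfl mul mul' hm hm' x y
    · intro b
      rw [LinearEquiv.ofLinear_apply, S7.mu_one_left, hEU, one_mul]

end QHA
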